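/- arXiv:2412.04042 — 9 statements merged into one kernel-verified Lean document; each statement's English description precedes it below -/
import Mathlib

section
/- Let G be a bipartite graph with parts X and Y, and let k ≥ 0. If some vertex v of G has more than 2k+2 neighbors that are themselves non-leaf vertices (degree ≥ 2), then G admits no 2-layer k-planar drawing. -/
open Function

/-- Two edges of a 2-layer drawing (positions `πX` on the upper layer,
`πY` on the lower layer) cross. -/
def cross2 {X Y : Type*} (πX : X → ℕ) (πY : Y → ℕ) (e f : X × Y) : Prop :=
  (πX e.1 < πX f.1 ∧ πY f.2 < πY e.2) ∨ (πX f.1 < πX e.1 ∧ πY e.2 < πY f.2)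

/-- A 2-layer drawing is `k`-planar: every edge is crossed by at most `k` edges. -/
def TwoLayerKPlanar {X Y : Type*} (k : ℕ) (πX : X → ℕ) (πY : Y → ℕ)
    (E : Set (X × Y)) : Prop :=
  ∀ e ∈ E, {f | f ∈ E ∧ cross2 πX πY e f}.ncard ≤ k

lemma exists_middle (T : Finset ℕ) (k : ℕ) (h : 2*k+3 ≤ T.card) :
    ∃ t ∈ T, k+1 ≤ (T.filter (· < t)).card ∧ k+1 ≤ (T.filter (t < ·)).card := by
  set n := T.card with hn
  set f := T.orderEmbOfFin hn.symm with hf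
  have hi : k + 1 < n := by omega
  set i : Fin n := ⟨k+1, hi⟩ with hidef
  refine ⟨f i, T.orderEmbOfFin_mem hn.symm i, ?_, ?_⟩
  · have hsub : (Finset.Iio i).image f ⊆ T.filter (· < f i) := by
      intro a ha
      obtain ⟨j, hj, rfl⟩ := Finset.mem_image.1 ha
      rw [Finset.mem_Iio] at hj
      exact Finset.mem_filter.2 ⟨T.orderEmbOfFin_mem hn.symm j, f.strictMono hj⟩
    have := Finset.card_le_card hsub
    rwa [Finset.card_image_of_injective _ f.injective, Fin.card_Iio] at this
  · have hsub : (Finset.Ioi i).image f ⊆ T.filter (f i < ·) := by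
      intro a ha
      obtain ⟨j, hj, rfl⟩ := Finset.mem_image.1 ha
      rw [Finset.mem_Ioi] at hj
      exact Finset.mem_filter.2 ⟨T.orderEmbOfFin_mem hn.symm j, f.strictMono hj⟩
    have := Finset.card_le_card hsub
    rw [Finset.card_image_of_injective _ f.injective, Fin.card_Ioi] at this
    have hiv : (i : ℕ) = k + 1 := rfl
    rw [hiv] at this
    omega

lemma aux {X Y : Type*} [Fintype X] [Fintype Y] (E : Set (X × Y)) (k : ℕ) (v : X)
    (hv : 2 * k + 2 < {y : Y | (v, y) ∈ E ∧ 2 ≤ {x : X | (x, y) ∈ E}.ncard}.ncard)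
    (πX : X → ℕ) (πY : Y → ℕ) (hX : Injective πX) (hY : Injective πY)
    (hpl : TwoLayerKPlanar k πX πY E) : False := by
  classical
  set S : Set Y := {y : Y | (v, y) ∈ E ∧ 2 ≤ {x : X | (x, y) ∈ E}.ncard} with hS
  set St := S.toFinset with hSt
  have hStcard : 2*k+3 ≤ St.card := by
    rw [← Set.ncard_eq_toFinset_card']
    omega
  set T := St.image πY with hT
  have hTcard : 2*k+3 ≤ T.card := by
    rw [hT, Finset.card_image_of_injective _ hY]; exact hStcard
  obtain ⟨t, htT, h1, h2⟩ := exists_middle T k hTcard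
  obtain ⟨y0, hy0, rfl⟩ := Finset.mem_image.1 htT
  have hy0S : y0 ∈ S := Set.mem_toFinset.1 hy0
  obtain ⟨hvy0, hdeg⟩ := hy0S
  obtain ⟨x, hxE, hxv⟩ := Set.exists_ne_of_one_lt_ncard (s := {x : X | (x, y0) ∈ E}) (by omega) v
  have hxE : (x, y0) ∈ E := hxE
  have hineq := hpl (x, y0) hxE
  set C : Set (X × Y) := {f | f ∈ E ∧ cross2 πX πY (x, y0) f} with hC
  rcases lt_trichotomy (πX x) (πX v) with hlt | heq | hgt
  · -- x left of v : edge (x,y0) crosses (v,y') for all y' ∈ S with πY y' < πY y0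
    set D : Set Y := {y' | y' ∈ S ∧ πY y' < πY y0} with hD
    have himg : (fun y' => (v, y')) '' D ⊆ C := by
      rintro _ ⟨y', ⟨hy'S, hy'lt⟩, rfl⟩
      exact ⟨hy'S.1, Or.inl ⟨hlt, hy'lt⟩⟩
    have hDcard : k + 1 ≤ D.ncard := by
      have heqf : T.filter (· < πY y0) = (St.filter (fun y => πY y < πY y0)).image πY := by
        ext a
        simp only [Finset.mem_filter, Finset.mem_image, hT]
        constructor
        · rintro ⟨⟨b, hb, rfl⟩, hab⟩; exact ⟨b, ⟨hb, hab⟩, rfl⟩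
        · rintro ⟨b, ⟨hb, hab⟩, rfl⟩; exact ⟨⟨b, hb, rfl⟩, hab⟩
      have hDfin : D = ↑(St.filter (fun y => πY y < πY y0)) := by
        ext a
        simp only [hD, Set.mem_setOf_eq, Finset.coe_filter]
        exact and_congr_left fun _ => Iff.symm Set.mem_toFinset
      rw [hDfin, Set.ncard_coe_finset]
      rw [heqf, Finset.card_image_of_injective _ hY] at h1
      exact h1
    have hinj : Injective (fun y' : Y => (v, y')) := fun a b hab => (Prod.ext_iff.1 hab).2
    have := Set.ncard_le_ncard himg (Set.toFinite C)
    rw [Set.ncard_image_of_injective _ hinj] at this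
    omega
  · exact hxv (hX heq)
  · set D : Set Y := {y' | y' ∈ S ∧ πY y0 < πY y'} with hD
    have himg : (fun y' => (v, y')) '' D ⊆ C := by
      rintro _ ⟨y', ⟨hy'S, hy'lt⟩, rfl⟩
      exact ⟨hy'S.1, Or.inr ⟨hgt, hy'lt⟩⟩
    have hDcard : k + 1 ≤ D.ncard := by
      have heqf : T.filter (πY y0 < ·) = (St.filter (fun y => πY y0 < πY y)).image πY := by
        ext a
        simp only [Finset.mem_filter, Finset.mem_image, hT]
        constructor
        · rintro ⟨⟨b, hb, rfl⟩, hab⟩; exact ⟨b, ⟨hb, hab⟩, rfl⟩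
        · rintro ⟨b, ⟨hb, hab⟩, rfl⟩; exact ⟨⟨b, hb, rfl⟩, hab⟩
      have hDfin : D = ↑(St.filter (fun y => πY y0 < πY y)) := by
        ext a
        simp only [hD, Set.mem_setOf_eq, Finset.coe_filter]
        exact and_congr_left fun _ => Iff.symm Set.mem_toFinset
      rw [hDfin, Set.ncard_coe_finset]
      rw [heqf, Finset.card_image_of_injective _ hY] at h2
      exact h2
    have hinj : Injective (fun y' : Y => (v, y')) := fun a b hab => (Prod.ext_iff.1 hab).2
    have := Set.ncard_le_ncard himg (Set.toFinite C)
    rw [Set.ncard_image_of_injective _ hinj] at this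
    omega

/-- If some vertex of the bipartite graph `E ⊆ X × Y` has more than `2k+2`
non-leaf neighbors (neighbors of degree at least 2), then the graph admits no
2-layer `k`-planar drawing. -/
theorem stmt0 {X Y : Type*} [Fintype X] [Fintype Y] (E : Set (X × Y)) (k : ℕ)
    (h : (∃ v : X, 2 * k + 2 <
            {y : Y | (v, y) ∈ E ∧ 2 ≤ {x : X | (x, y) ∈ E}.ncard}.ncard) ∨
         (∃ w : Y, 2 * k + 2 <
            {x : X | (x, w) ∈ E ∧ 2 ≤ {y : Y | (x, y) ∈ E}.ncard}.ncard)) :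
    ¬ ∃ (πX : X → ℕ) (πY : Y → ℕ), Injective πX ∧ Injective πY ∧
        TwoLayerKPlanar k πX πY E := by
  rintro ⟨πX, πY, hX, hY, hpl⟩
  rcases h with ⟨v, hv⟩ | ⟨w, hw⟩
  · exact aux E k v hv πX πY hX hY hpl
  · set E' : Set (Y × X) := {p | (p.2, p.1) ∈ E} with hE'
    have hpl' : TwoLayerKPlanar k πY πX E' := by
      intro e he
      have key : {f | f ∈ E' ∧ cross2 πY πX e f}
          = Prod.swap '' {g | g ∈ E ∧ cross2 πX πY e.swap g} := by
        ext f
        constructor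
        · rintro ⟨hf, hcr⟩
          refine ⟨f.swap, ⟨hf, ?_⟩, Prod.swap_swap f⟩
          unfold cross2 at hcr ⊢
          simp only [Prod.fst_swap, Prod.snd_swap]
          tauto
        · rintro ⟨g, ⟨hg, hcr⟩, rfl⟩
          refine ⟨hg, ?_⟩
          unfold cross2 at hcr ⊢
          simp only [Prod.fst_swap, Prod.snd_swap] at *
          tauto
      rw [key, Set.ncard_image_of_injective _ Prod.swap_injective]
      exact hpl e.swap he
    exact aux E' k w hw πY πX hY hX hpl'
end

section
/- Let G = (X ∪ Y, E) be a bipartite graph, <_X a linear order on X, and k ≥ 0. If v ∈ X has degree greater than 2k+2 and has a leaf neighbor y ∈ Y, then there exists a linear order <_Y on Y making (<_X, <_Y) a 2-layer k-planar drawing of G if and only if there exists a linear order <_Y' on Y∖{y} making (<_X, <_Y') a 2-layer k-planar drawing of G − y. -/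
/-!
Deleting a vertex cannot create crossings. Conversely, take a `k`-planar drawing of `G - y` and
place the leaf `y` directly after the `(k+1)`-st neighbour of `v`, so that at least `k+1`
neighbours of `v` lie on either side of it. An edge crossing `(v, y)` would then cross all the
edges from `v` to the neighbours on one side, i.e. more than `k` edges; so `(v, y)` is crossed by
nothing, and all other crossings are those of the drawing of `G - y`.
-/

open Function

open Finset

namespace Finset

variable {ι α : Type*} [LinearOrder α]

theorem exists_card_filter_lt_eq [DecidableEq ι] (s : Finset ι) (f : ι → α)
    (hf : Set.InjOn f s) {n : ℕ} (hn : n < #s) : ∃ i ∈ s, #{j ∈ s | f j < f i} = n := by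
  induction s using Finset.induction_on_max_value f generalizing n with
  | empty => simp at hn
  | insert a s ha hmax ih =>
    rw [card_insert_of_notMem ha] at hn
    rcases (Nat.lt_succ_iff.mp hn).lt_or_eq with hn | rfl
    · obtain ⟨i, hi, hcard⟩ := ih (hf.mono (subset_insert a s)) hn
      refine ⟨i, mem_insert_of_mem hi, ?_⟩
      rwa [filter_insert, if_neg (hmax i hi).not_gt]
    · refine ⟨a, mem_insert_self a s, ?_⟩
      rw [filter_insert, if_neg (lt_irrefl _), filter_true_of_mem]
      intro j hj
      refine (hmax j hj).lt_of_ne fun hja => ?_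
      exact ha (hf (mem_insert_of_mem hj) (mem_insert_self a s) hja ▸ hj)

end Finset

section Crossing

variable {X Y : Type*} {πX : X → ℕ} {πY πY' : Y → ℕ}

theorem cross2_comm {e f : X × Y} : cross2 πX πY e f ↔ cross2 πX πY f e := by
  unfold cross2; tauto

theorem not_cross2_self (e : X × Y) : ¬cross2 πX πY e e := by
  unfold cross2; omega

theorem cross2_congr {e f : X × Y} (h₁ : πY e.2 < πY f.2 ↔ πY' e.2 < πY' f.2)
    (h₂ : πY f.2 < πY e.2 ↔ πY' f.2 < πY' e.2) :
    cross2 πX πY e f ↔ cross2 πX πY' e f := by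
  rw [cross2, cross2, h₁, h₂]

end Crossing

namespace TwoLayerKPlanar

variable {X Y : Type*} {k : ℕ} {πX : X → ℕ} {πY πY' : Y → ℕ} {E F : Set (X × Y)}

theorem congr_order (h : TwoLayerKPlanar k πX πY E)
    (hcross : ∀ e ∈ E, ∀ f ∈ E, cross2 πX πY e f ↔ cross2 πX πY' e f) :
    TwoLayerKPlanar k πX πY' E := by
  intro e he
  have hset : {f | f ∈ E ∧ cross2 πX πY' e f} = {f | f ∈ E ∧ cross2 πX πY e f} :=
    Set.ext fun f => and_congr_right fun hf => (hcross e he f hf).symm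
  exact hset ▸ h e he

variable [Finite X] [Finite Y]

theorem mono (h : TwoLayerKPlanar k πX πY E) (hFE : F ⊆ E) : TwoLayerKPlanar k πX πY F := by
  intro e he
  refine (Set.ncard_le_ncard ?_ (Set.toFinite _)).trans (h e (hFE he))
  exact fun f hf => ⟨hFE hf.1, hf.2⟩

theorem insert_of_forall_not_cross2 {e : X × Y} (h : TwoLayerKPlanar k πX πY F)
    (he : ∀ f ∈ F, ¬cross2 πX πY e f) :
    TwoLayerKPlanar k πX πY (insert e F) := by
  have hsub : ∀ g ∈ insert e F, {f | f ∈ insert e F ∧ cross2 πX πY g f} ⊆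
      {f | f ∈ F ∧ cross2 πX πY g f} := by
    rintro g hg f ⟨rfl | hf, hgf⟩
    · rcases hg with rfl | hg
      · exact absurd hgf (not_cross2_self _)
      · exact absurd (cross2_comm.mp hgf) (he g hg)
    · exact ⟨hf, hgf⟩
  rintro g (rfl | hg)
  · rw [Set.subset_eq_empty (hsub g (Set.mem_insert g F)) (by simpa using he),
    Set.ncard_empty]
    exact Nat.zero_le k
  · exact (Set.ncard_le_ncard (hsub g (Set.mem_insert_of_mem e hg)) (Set.toFinite _)).trans
      (h g hg)

theorem card_le_of_forall_cross {e : X × Y} (h : TwoLayerKPlanar k πX πY E) (he : e ∈ E)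
    (v : X) (S : Finset Y) (hS : ∀ y ∈ S, (v, y) ∈ E ∧ cross2 πX πY e (v, y)) :
    #S ≤ k :=
  calc #S = (Prod.mk v '' (S : Set Y)).ncard := by
        rw [Set.ncard_image_of_injective _ (Prod.mk_right_injective v), Set.ncard_coe_finset]
    _ ≤ {f | f ∈ E ∧ cross2 πX πY e f}.ncard :=
        Set.ncard_le_ncard (Set.image_subset_iff.mpr hS) (Set.toFinite _)
    _ ≤ k := h e he

/-- The disjunction says that `(x, y)` would cross an edge from `v` to a vertex placed just before
position `t`. -/
theorem not_cross_cut_of_lt_card (h : TwoLayerKPlanar k πX πY E) {v x : X} {y : Y}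
    (hxy : (x, y) ∈ E) (N : Finset Y) (hN : ∀ y' ∈ N, (v, y') ∈ E) {t : ℕ}
    (hlo : k < #{y' ∈ N | πY y' < t}) (hhi : k < #{y' ∈ N | t ≤ πY y'}) :
    ¬((πX v < πX x ∧ πY y < t) ∨ (πX x < πX v ∧ t ≤ πY y)) := by
  rintro (⟨hx, hy⟩ | ⟨hx, hy⟩)
  · refine hhi.not_ge (h.card_le_of_forall_cross hxy v _ fun y' hy' => ?_)
    obtain ⟨hy'N, hty'⟩ := Finset.mem_filter.mp hy'
    exact ⟨hN y' hy'N, Or.inr ⟨hx, by simp only; omega⟩⟩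
  · refine hlo.not_ge (h.card_le_of_forall_cross hxy v _ fun y' hy' => ?_)
    obtain ⟨hy'N, hy't⟩ := Finset.mem_filter.mp hy'
    exact ⟨hN y' hy'N, Or.inl ⟨hx, by simp only; omega⟩⟩

end TwoLayerKPlanar

section InsertBefore

variable {X Y : Type*} [DecidableEq Y]

def insertBefore (πY : Y → ℕ) (y0 : Y) (t : ℕ) (y : Y) : ℕ :=
  if y = y0 then 2 * t else 2 * πY y + 1

variable {πY : Y → ℕ} {y0 : Y} {t : ℕ}

@[simp] theorem insertBefore_self : insertBefore πY y0 t y0 = 2 * t := if_pos rfl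

@[simp] theorem insertBefore_of_ne {y : Y} (hy : y ≠ y0) :
    insertBefore πY y0 t y = 2 * πY y + 1 :=
  if_neg hy

theorem insertBefore_injective (h : Set.InjOn πY {y | y ≠ y0}) :
    Injective (insertBefore πY y0 t) := by
  intro a b hab
  by_cases ha : a = y0 <;> by_cases hb : b = y0
  · exact ha.trans hb.symm
  all_goals simp only [ha, hb, insertBefore_self, insertBefore_of_ne, ne_eq, not_false_eq_true]
    at hab
  · omega
  · omega
  · exact h ha hb (by omega)

theorem cross2_insertBefore_iff {πX : X → ℕ} {e f : X × Y} (he : e.2 ≠ y0)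
    (hf : f.2 ≠ y0) :
    cross2 πX (insertBefore πY y0 t) e f ↔ cross2 πX πY e f := by
  refine cross2_congr ?_ ?_ <;>
    simp only [insertBefore_of_ne he, insertBefore_of_ne hf] <;> omega

theorem cross2_insertBefore_self_iff {πX : X → ℕ} {v x : X} {y : Y} (hy : y ≠ y0) :
    cross2 πX (insertBefore πY y0 t) (v, y0) (x, y) ↔
      (πX v < πX x ∧ πY y < t) ∨ (πX x < πX v ∧ t ≤ πY y) := by
  simp only [cross2, insertBefore_self, insertBefore_of_ne hy]
  omega

end InsertBefore

theorem eq_insert_of_ncard_eq_one {X Y : Type*} {E : Set (X × Y)} {v : X} {y0 : Y}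
    (hvy : (v, y0) ∈ E) (hleaf : {x : X | (x, y0) ∈ E}.ncard = 1) :
    E = insert (v, y0) {f | f ∈ E ∧ f.2 ≠ y0} := by
  obtain ⟨a, ha⟩ := Set.ncard_eq_one.mp hleaf
  have hv : v = a := by simpa [ha] using (show v ∈ {x : X | (x, y0) ∈ E} from hvy)
  ext ⟨x, y⟩
  by_cases hy : y = y0
  · subst hy
    have : (x, y) ∈ E ↔ x = a := by simpa using Set.ext_iff.mp ha x
    simp [this, hv]
  · simp [hy]

theorem stmt1_general {X Y : Type*} [Fintype X] [Fintype Y] (E : Set (X × Y)) (k : ℕ)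
    (πX : X → ℕ) (v : X) (y0 : Y)
    (hdeg : 2 * k + 2 < {y : Y | (v, y) ∈ E}.ncard)
    (hvy : (v, y0) ∈ E) (hleaf : {x : X | (x, y0) ∈ E}.ncard = 1) :
    (∃ πY : Y → ℕ, Injective πY ∧ TwoLayerKPlanar k πX πY E) ↔
    (∃ πY : Y → ℕ, Set.InjOn πY {y | y ≠ y0} ∧
        TwoLayerKPlanar k πX πY {f | f ∈ E ∧ f.2 ≠ y0}) := by
  classical
  constructor
  · rintro ⟨πY, hinj, hpl⟩
    exact ⟨πY, hinj.injOn, hpl.mono fun f hf => hf.1⟩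
  · rintro ⟨πY, hinj, hpl⟩
    set N : Finset Y := {y | (v, y) ∈ E ∧ y ≠ y0}
    have hN : 2 * k + 2 ≤ #N := by
      have hsub : {y : Y | (v, y) ∈ E} ⊆ insert y0 (N : Set Y) := fun y hy => by
        by_cases h : y = y0 <;> simp_all [N]
      have := (Set.ncard_le_ncard hsub).trans (Set.ncard_insert_le _ _)
      rw [Set.ncard_coe_finset] at this
      omega
    obtain ⟨i, -, hlo⟩ := N.exists_card_filter_lt_eq πY
      (hinj.mono fun y hy => (Finset.mem_filter.mp hy).2.2) (n := k + 1) (by omega)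
    have hhi : k < #{y ∈ N | πY i ≤ πY y} := by
      have := Finset.card_filter_add_card_filter_not (s := N) (fun y => πY y < πY i)
      simp only [not_lt] at this
      omega
    refine ⟨insertBefore πY y0 (πY i), insertBefore_injective hinj, ?_⟩
    rw [eq_insert_of_ncard_eq_one hvy hleaf]
    have hpl' : TwoLayerKPlanar k πX (insertBefore πY y0 (πY i)) {f | f ∈ E ∧ f.2 ≠ y0} :=
      hpl.congr_order fun e he f hf => (cross2_insertBefore_iff he.2 hf.2).symm
    refine hpl'.insert_of_forall_not_cross2 ?_
    rintro ⟨x, y⟩ hxy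
    rw [cross2_insertBefore_self_iff hxy.2]
    exact hpl.not_cross_cut_of_lt_card hxy N (fun y hy => by simpa [N] using hy) (by omega) hhi

/-- If `v ∈ X` has degree greater than `2k+2` and has a leaf neighbor `y0 ∈ Y`,
then (for the fixed order `πX` on `X`) `G` has a 2-layer `k`-planar drawing iff
`G - y0` has one. -/
theorem stmt1 {X Y : Type*} [Fintype X] [Fintype Y] (E : Set (X × Y)) (k : ℕ)
    (πX : X → ℕ) (hπX : Injective πX) (v : X) (y0 : Y)
    (hdeg : 2 * k + 2 < {y : Y | (v, y) ∈ E}.ncard)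
    (hvy : (v, y0) ∈ E) (hleaf : {x : X | (x, y0) ∈ E}.ncard = 1) :
    (∃ πY : Y → ℕ, Injective πY ∧ TwoLayerKPlanar k πX πY E) ↔
    (∃ πY : Y → ℕ, Set.InjOn πY {y | y ≠ y0} ∧
        TwoLayerKPlanar k πX πY {f | f ∈ E ∧ f.2 ≠ y0}) :=
  stmt1_general E k πX v y0 hdeg hvy hleaf
end

section
/- Let G = (X ∪ Y, E) be a bipartite graph with no isolated vertices in X, let D = (<_X, <_Y) be a 2-layer k-planar drawing of G, and let x_1 <_X x_2 <_X ⋯ <_X x_{|X|} be the vertices of X. If e = {x_p, y} and f = {x_q, y'} are distinct edges with q > p + 2k, then y <_Y y' or y = y'. -/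
open Function

/-- In a 2-layer `k`-planar drawing of a bipartite graph with no isolated
vertices in `X` (whose `X`-order is given by the ranking `ρ`), if two distinct
edges `(x_p, y)` and `(x_q, y')` satisfy `q > p + 2k`, then `y <_Y y'` or `y = y'`. -/
theorem stmt2 {X Y : Type*} [Fintype X] [Fintype Y] (E : Set (X × Y)) (k : ℕ)
    (ρ : X ≃ Fin (Fintype.card X)) (πY : Y → ℕ) (hπY : Injective πY)
    (hdeg : ∀ x : X, ∃ y : Y, (x, y) ∈ E)
    (hpl : TwoLayerKPlanar k (fun x => ((ρ x : Fin (Fintype.card X)) : ℕ)) πY E)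
    (xp xq : X) (y y' : Y)
    (he : (xp, y) ∈ E) (hf : (xq, y') ∈ E) (hne : (xp, y) ≠ (xq, y'))
    (hfar : ((ρ xp : Fin (Fintype.card X)) : ℕ) + 2 * k
              < ((ρ xq : Fin (Fintype.card X)) : ℕ)) :
    πY y < πY y' ∨ y = y' := by
  classical
  by_contra hcon
  push_neg at hcon
  obtain ⟨hge, hney⟩ := hcon
  have hyy' : πY y' < πY y := lt_of_le_of_ne hge (fun h => hney (hπY h).symm)
  have π : X → ℕ := fun x => ((ρ x : Fin (Fintype.card X)) : ℕ)
  have hqn : ((ρ xq : Fin (Fintype.card X)) : ℕ) < Fintype.card X := (ρ xq).isLt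
  have c : ∀ x : X, (x, (hdeg x).choose) ∈ E := fun x => (hdeg x).choose_spec
  set A := {g | g ∈ E ∧
    cross2 (fun x => ((ρ x : Fin (Fintype.card X)) : ℕ)) πY (xp, y) g} with hA
  set B := {g | g ∈ E ∧
    cross2 (fun x => ((ρ x : Fin (Fintype.card X)) : ℕ)) πY (xq, y') g} with hB
  have hAk : A.ncard ≤ k := hpl _ he
  have hBk : B.ncard ≤ k := hpl _ hf
  set T : Finset X := Finset.univ.filter (fun x =>
    ((ρ xp : Fin (Fintype.card X)) : ℕ) < ((ρ x : Fin (Fintype.card X)) : ℕ) ∧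
    ((ρ x : Fin (Fintype.card X)) : ℕ) < ((ρ xq : Fin (Fintype.card X)) : ℕ)) with hT
  have hTcard : 2 * k ≤ T.card := by
    have hlt : ∀ i : Fin (2 * k),
        ((ρ xp : Fin (Fintype.card X)) : ℕ) + 1 + (i : ℕ) < Fintype.card X := by
      intro i; have := i.isLt; omega
    have hmem : ∀ i ∈ (Finset.univ : Finset (Fin (2 * k))),
        ρ.symm ⟨((ρ xp : Fin (Fintype.card X)) : ℕ) + 1 + (i : ℕ), hlt i⟩ ∈ T := by
      intro i _
      simp only [hT, Finset.mem_filter, Finset.mem_univ, true_and,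
        Equiv.apply_symm_apply]
      have := i.isLt
      constructor <;> omega
    have := Finset.card_le_card_of_injOn
      (fun i : Fin (2 * k) =>
        ρ.symm ⟨((ρ xp : Fin (Fintype.card X)) : ℕ) + 1 + (i : ℕ), hlt i⟩) hmem
      (by
        intro i _ j _ hij
        have h2 := congrArg ρ hij
        simp only [Equiv.apply_symm_apply, Fin.mk.injEq] at h2
        exact Fin.ext (by omega))
    simpa using this
  set h : X → X × Y := fun x => (x, (hdeg x).choose) with hh
  have himg : ∀ x ∈ T, h x ∈ A ∪ B := by
    intro x hx
    simp only [hT, Finset.mem_filter, Finset.mem_univ, true_and] at hx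
    obtain ⟨hpx, hxq⟩ := hx
    by_cases hc : πY ((hdeg x).choose) < πY y
    · left; exact ⟨c x, Or.inl ⟨hpx, hc⟩⟩
    · right
      push_neg at hc
      exact ⟨c x, Or.inr ⟨hxq, lt_of_lt_of_le hyy' hc⟩⟩
  set F : Finset (X × Y) := insert (xp, y) (insert (xq, y') (T.image h)) with hF
  have hximg : ∀ g ∈ T.image h,
      ((ρ xp : Fin (Fintype.card X)) : ℕ) < ((ρ g.1 : Fin (Fintype.card X)) : ℕ) ∧
      ((ρ g.1 : Fin (Fintype.card X)) : ℕ) < ((ρ xq : Fin (Fintype.card X)) : ℕ) := by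
    intro g hg
    obtain ⟨x, hx, rfl⟩ := Finset.mem_image.mp hg
    simp only [hT, Finset.mem_filter, Finset.mem_univ, true_and] at hx
    exact hx
  have hfnot : (xq, y') ∉ T.image h := by
    intro hg
    exact lt_irrefl _ (hximg _ hg).2
  have henot : (xp, y) ∉ insert (xq, y') (T.image h) := by
    intro hg
    rcases Finset.mem_insert.mp hg with hg | hg
    · exact hne hg
    · exact lt_irrefl _ (hximg _ hg).1
  have hFcard : 2 * k + 2 ≤ F.card := by
    rw [hF, Finset.card_insert_of_notMem henot, Finset.card_insert_of_notMem hfnot,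
      Finset.card_image_of_injective _ (fun a b hab => congrArg Prod.fst hab)]
    omega
  have hFsub : (F : Set (X × Y)) ⊆ A ∪ B := by
    intro g hg
    simp only [hF, Finset.coe_insert, Set.mem_insert_iff, Finset.mem_coe] at hg
    rcases hg with rfl | rfl | hg
    · right
      exact ⟨he, Or.inr ⟨by simp only; omega, hyy'⟩⟩
    · left
      exact ⟨hf, Or.inl ⟨by simp only; omega, hyy'⟩⟩
    · obtain ⟨x, hx, rfl⟩ := Finset.mem_image.mp hg
      exact himg x hx
  have h1 : F.card ≤ (A ∪ B).ncard := by
    have : (F : Set (X × Y)).ncard ≤ (A ∪ B).ncard :=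
      Set.ncard_le_ncard hFsub (Set.toFinite _)
    simpa [Set.ncard_coe_finset] using this
  have h2 : (A ∪ B).ncard ≤ A.ncard + B.ncard := Set.ncard_union_le A B
  omega
end

section
/- Let G = (X ∪ Y, E) be a bipartite graph, let D = (<_X, <_Y) be a 2-layer k-planar drawing of G, and let S ⊆ X be a set of 2k+1 vertices that appear consecutively in <_X among the vertices of X. Let x be the <_X-minimum and x' the <_X-maximum vertex of S. Then for every connected component C of the graph G with the closed neighborhood N[S] removed, the vertices of C ∩ X either all satisfy v <_X x or all satisfy x' <_X v. -/
open Function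

/-- The bipartite graph on `X ⊕ Y` determined by the edge set `E ⊆ X × Y`. -/
def twoLayerGraph {X Y : Type*} (E : Set (X × Y)) : SimpleGraph (X ⊕ Y) where
  Adj a b := (∃ x y, (x, y) ∈ E ∧ a = Sum.inl x ∧ b = Sum.inr y) ∨
             (∃ x y, (x, y) ∈ E ∧ a = Sum.inr y ∧ b = Sum.inl x)
  symm := by
    constructor
    rintro a b (⟨x, y, h, rfl, rfl⟩ | ⟨x, y, h, rfl, rfl⟩)
    · exact Or.inr ⟨x, y, h, rfl, rfl⟩
    · exact Or.inl ⟨x, y, h, rfl, rfl⟩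
  loopless := by
    constructor
    rintro a (⟨x, y, h, rfl, h2⟩ | ⟨x, y, h, rfl, h2⟩) <;> simp at h2

/-- Closed neighborhood (in the bipartite graph given by `E`) of a set `S ⊆ X`. -/
def closedNbhd {X Y : Type*} (E : Set (X × Y)) (S : Set X) : Set (X ⊕ Y) :=
  {z | (∃ x ∈ S, z = Sum.inl x) ∨ (∃ y : Y, (∃ x ∈ S, (x, y) ∈ E) ∧ z = Sum.inr y)}

/-!
A vertex `y ∉ N(S)` with neighbours `x` left of `S` and `x'` right of `S` is impossible: every
`s ∈ S` has some edge `(s, y_s)` with `y_s ≠ y`, and that edge crosses `(x, y)` or `(x', y)`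
according to the side of `y` on which `y_s` lies. Hence one of these two edges has at least
`k + 1` crossings. So in a connected set avoiding `N[S]`, "lying left of `S`" (for a `Y`-vertex:
having a neighbour left of `S`) propagates along edges.
-/

theorem SimpleGraph.Reachable.of_adj_closed {V : Type*} {G : SimpleGraph V} {p : V → Prop}
    (hp : ∀ u v, G.Adj u v → p u → p v) {u v : V} (h : G.Reachable u v) (hu : p u) : p v := by
  obtain ⟨w⟩ := h
  induction w with
  | nil => exact hu
  | cons hadj _ ih => exact ih (hp _ _ hadj hu)

section TwoLayer

variable {X Y : Type*} {E : Set (X × Y)} {πX : X → ℕ} {πY : Y → ℕ}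

theorem cross2_or_cross2_of_between {x s x' : X} {y y' : Y} (hxs : πX x < πX s)
    (hsx' : πX s < πX x') (hy : πY y' ≠ πY y) :
    cross2 πX πY (x, y) (s, y') ∨ cross2 πX πY (x', y) (s, y') := by
  rcases hy.lt_or_gt with h | h
  · exact Or.inl (Or.inl ⟨hxs, h⟩)
  · exact Or.inr (Or.inr ⟨hsx', h⟩)

theorem TwoLayerKPlanar.card_le_of_between [Finite X] [Finite Y] {k : ℕ}
    (hpl : TwoLayerKPlanar k πX πY E) (hπY : Injective πY) {x x' : X} {y : Y}
    (hx : (x, y) ∈ E) (hx' : (x', y) ∈ E) {S : Finset X}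
    (hbetween : ∀ s ∈ S, πX x < πX s ∧ πX s < πX x')
    (hnbr : ∀ s ∈ S, ∃ y', y' ≠ y ∧ (s, y') ∈ E) :
    S.card ≤ 2 * k := by
  have : Nonempty Y := ⟨y⟩
  choose! ys hys_ne hys_mem using hnbr
  let crossing (e : X × Y) := {f | f ∈ E ∧ cross2 πX πY e f}
  have hmaps : Set.MapsTo (fun s => (s, ys s)) (S : Set X)
      (crossing (x, y) ∪ crossing (x', y)) := by
    intro s hs
    rcases cross2_or_cross2_of_between (hbetween s hs).1 (hbetween s hs).2
        (hπY.ne (hys_ne s hs)) with h | h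
    · exact Or.inl ⟨hys_mem s hs, h⟩
    · exact Or.inr ⟨hys_mem s hs, h⟩
  calc S.card = (S : Set X).ncard := (Set.ncard_coe_finset S).symm
    _ ≤ (crossing (x, y) ∪ crossing (x', y)).ncard :=
        Set.ncard_le_ncard_of_injOn _ hmaps (fun a _ b _ h => congrArg Prod.fst h) (Set.toFinite _)
    _ ≤ (crossing (x, y)).ncard + (crossing (x', y)).ncard := Set.ncard_union_le _ _
    _ ≤ 2 * k := two_mul k ▸ add_le_add (hpl _ hx) (hpl _ hx')

theorem lt_or_lt_of_notMem_of_consecutive (hπX : Injective πX) {S : Finset X}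
    (hconsec : ∀ x1 ∈ S, ∀ x2 ∈ S, ∀ z : X, πX x1 < πX z → πX z < πX x2 → z ∈ S)
    {xmin xmax : X} (hmin : xmin ∈ S) (hmax : xmax ∈ S) {x : X} (hx : x ∉ S) :
    πX x < πX xmin ∨ πX xmax < πX x := by
  have hne_min : πX x ≠ πX xmin := hπX.ne (by rintro rfl; exact hx hmin)
  have hne_max : πX x ≠ πX xmax := hπX.ne (by rintro rfl; exact hx hmax)
  by_contra! h
  exact hx (hconsec xmin hmin xmax hmax x (lt_of_le_of_ne h.1 hne_min.symm)
    (lt_of_le_of_ne h.2 hne_max))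

variable (E πX) in
def IsLeftOf (b : ℕ) : X ⊕ Y → Prop :=
  Sum.elim (fun x => πX x < b) (fun y => ∃ x, (x, y) ∈ E ∧ πX x < b)

theorem forall_lt_of_exists_lt_of_preconnected {C : Set (X ⊕ Y)} {a b : ℕ}
    (hconn : ((twoLayerGraph E).induce C).Preconnected)
    (hside : ∀ x, Sum.inl x ∈ C → πX x < a ∨ b < πX x)
    (hstraddle : ∀ y, Sum.inr y ∈ C → ∀ x x', (x, y) ∈ E → (x', y) ∈ E → πX x < a → πX x' ≤ b)
    {x₀ : X} (hx₀C : Sum.inl x₀ ∈ C) (hx₀ : πX x₀ < a) :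
    ∀ x, Sum.inl x ∈ C → πX x < a := by
  have hstep : ∀ u v : C, ((twoLayerGraph E).induce C).Adj u v →
      IsLeftOf E πX a u.1 → IsLeftOf E πX a v.1 := by
    rintro ⟨u, hu⟩ ⟨v, hv⟩ (⟨x, y, hxy, rfl, rfl⟩ | ⟨x, y, hxy, rfl, rfl⟩) h
    · exact ⟨x, hxy, h⟩
    · obtain ⟨x', hx'y, hx'⟩ := h
      exact (hside x hv).resolve_right (not_lt.2 (hstraddle y hu x' x hx'y hxy hx'))
  intro x hx
  exact (hconn ⟨_, hx₀C⟩ ⟨_, hx⟩).of_adj_closed hstep hx₀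

end TwoLayer

/-- In a 2-layer `k`-planar drawing, a set `S` of `2k+1` consecutive vertices of
the `X`-layer separates: every connected set `C` of vertices avoiding `N[S]`
has its `X`-vertices entirely to the left of `S` or entirely to its right. -/
theorem stmt3 {X Y : Type*} [Fintype X] [Fintype Y] (E : Set (X × Y)) (k : ℕ)
    (πX : X → ℕ) (πY : Y → ℕ) (hπX : Injective πX) (hπY : Injective πY)
    (hdeg : ∀ x : X, ∃ y : Y, (x, y) ∈ E)
    (hpl : TwoLayerKPlanar k πX πY E)
    (S : Finset X) (hcard : S.card = 2 * k + 1)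
    (hconsec : ∀ x1 ∈ S, ∀ x2 ∈ S, ∀ z : X, πX x1 < πX z → πX z < πX x2 → z ∈ S)
    (xmin xmax : X) (hmin : xmin ∈ S) (hmax : xmax ∈ S)
    (hminLe : ∀ s ∈ S, πX xmin ≤ πX s) (hmaxLe : ∀ s ∈ S, πX s ≤ πX xmax)
    (C : Set (X ⊕ Y))
    (hCdisj : ∀ z ∈ C, z ∉ closedNbhd E (↑S : Set X))
    (hCconn : ((twoLayerGraph E).induce C).Connected) :
    (∀ x : X, Sum.inl x ∈ C → πX x < πX xmin) ∨
    (∀ x : X, Sum.inl x ∈ C → πX xmax < πX x) := by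
  have hside : ∀ x, Sum.inl x ∈ C → πX x < πX xmin ∨ πX xmax < πX x := fun x hx =>
    lt_or_lt_of_notMem_of_consecutive hπX hconsec hmin hmax
      fun hxS => hCdisj _ hx (Or.inl ⟨x, hxS, rfl⟩)
  have hstraddle : ∀ y, Sum.inr y ∈ C → ∀ x x', (x, y) ∈ E → (x', y) ∈ E →
      πX x < πX xmin → πX x' ≤ πX xmax := by
    intro y hy x x' hx hx' hxl
    by_contra! hx'r
    have hyS : ∀ s ∈ S, (s, y) ∉ E := fun s hs hsy =>
      hCdisj _ hy (Or.inr ⟨y, ⟨s, hs, hsy⟩, rfl⟩)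
    have := hpl.card_le_of_between hπY hx hx'
      (fun s hs => ⟨hxl.trans_le (hminLe s hs), (hmaxLe s hs).trans_lt hx'r⟩)
      (fun s hs => (hdeg s).imp fun y' hsy' => ⟨by rintro rfl; exact hyS s hs hsy', hsy'⟩)
    omega
  by_cases hleft : ∃ x₀, Sum.inl x₀ ∈ C ∧ πX x₀ < πX xmin
  · obtain ⟨x₀, hx₀C, hx₀⟩ := hleft
    exact Or.inl (forall_lt_of_exists_lt_of_preconnected hCconn.preconnected hside hstraddle
      hx₀C hx₀)
  · push Not at hleft
    exact Or.inr fun x hx => (hside x hx).resolve_left (not_lt.2 (hleft x hx))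
end

section
/- Let G be a graph admitting an outer k-planar drawing D (a cyclic order of its vertices such that every edge is crossed at most k times), and let u, v be two distinct vertices of G. Then there are at most 2k+3 internally vertex-disjoint paths between u and v in G. -/
open Function

/-- Position of the lower endpoint of an edge in a circular drawing given by
vertex positions `π`. -/
def elo {V : Type*} (π : V → ℕ) : Sym2 V → ℕ :=
  Sym2.lift ⟨fun a b => min (π a) (π b), fun a b => min_comm (π a) (π b)⟩

/-- Position of the upper endpoint of an edge in a circular drawing. -/
def ehi {V : Type*} (π : V → ℕ) : Sym2 V → ℕ :=
  Sym2.lift ⟨fun a b => max (π a) (π b), fun a b => max_comm (π a) (π b)⟩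

/-- Two edges (or vertex pairs) cross (equivalently, the first pierces the
second) in the circular drawing given by positions `π`:
`i < i' < j < j'` or `i' < i < j' < j`. -/
def ecross {V : Type*} (π : V → ℕ) (e f : Sym2 V) : Prop :=
  (elo π e < elo π f ∧ elo π f < ehi π e ∧ ehi π e < ehi π f) ∨
  (elo π f < elo π e ∧ elo π e < ehi π f ∧ ehi π f < ehi π e)

/-- The number of edges of `G` crossing `e` in the circular drawing `π`. -/
noncomputable def crossNum {V : Type*} (G : SimpleGraph V) (π : V → ℕ)
    (e : Sym2 V) : ℕ :=
  {f | f ∈ G.edgeSet ∧ ecross π e f}.ncard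

/-- `π` is an outer `k`-planar drawing of `G`: an injective assignment of
positions (a circular order) such that every edge crosses at most `k` edges. -/
def IsOuterKPlanar {V : Type*} (G : SimpleGraph V) (k : ℕ) (π : V → ℕ) : Prop :=
  Injective π ∧ ∀ e ∈ G.edgeSet, crossNum G π e ≤ k

/-!
Every path other than the edge `uv` leaves `u` along an edge `uw` with `w` on one of the two
arcs of the circle between `u` and `v`. Among the paths leaving into the same arc, take the one
whose `w` is farthest from `u`: the chord `uw` separates the first inner vertex of every other
such path from `v`, so each of them crosses `uw`, along an edge of its own. Hence each arc
carries at most `k + 1` paths, and with the edge `uv` there are at most `2k + 3`. Crossings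
depend only on the circular order up to reflection, so both arcs are handled alike after
relabelling the circle so that `u` comes first and the arc in question is the interval from
`u` to `v`.
-/

open SimpleGraph

section CyclicOrder

attribute [local instance] LT.toSBtw

variable {V : Type*}

lemma ecross_mk_iff_sbtw (π : V → ℕ) (a b c d : V) :
    ecross π s(a, b) s(c, d) ↔
      sbtw (π a) (π c) (π b) ∧ sbtw (π b) (π d) (π a) ∨
        sbtw (π a) (π d) (π b) ∧ sbtw (π b) (π c) (π a) := by
  simp only [ecross, elo, ehi, Sym2.lift_mk, sbtw_iff]
  omega

/-- For `p < N` this is `(t - p) mod N`, a reflection of the circle `ℤ/Nℤ`. -/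
def reflectMod (N t p : ℕ) : ℕ := if p ≤ t then t - p else t + N - p

@[simp]
lemma reflectMod_self (N t : ℕ) : reflectMod N t t = 0 := by simp [reflectMod]

lemma reflectMod_lt {N t p : ℕ} (ht : t < N) (hp : p < N) : reflectMod N t p < N := by
  unfold reflectMod; split_ifs <;> omega

lemma reflectMod_injOn {N t p q : ℕ} (hp : p < N) (hq : q < N)
    (h : reflectMod N t p = reflectMod N t q) : p = q := by
  unfold reflectMod at h; split_ifs at h <;> omega

lemma mem_Ioo_or_reflectMod_mem_Ioo {N a b : ℕ} (ha : a < N) (hb : b < N) (ha0 : a ≠ 0)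
    (hb0 : b ≠ 0) (hab : a ≠ b) :
    a ∈ Set.Ioo 0 b ∨
      reflectMod N 0 a ∈ Set.Ioo (reflectMod N 0 0) (reflectMod N 0 b) := by
  simp only [Set.mem_Ioo, reflectMod]
  split_ifs <;> omega

lemma sbtw_reflectMod {N t a b c : ℕ} (ha : a < N) (hb : b < N) (hc : c < N) :
    sbtw (reflectMod N t a) (reflectMod N t b) (reflectMod N t c) ↔ sbtw c b a := by
  simp only [sbtw_iff, reflectMod]
  split_ifs <;> omega

lemma ecross_reflectMod {π : V → ℕ} {N : ℕ} (hN : ∀ x, π x < N) (t : ℕ) (e f : Sym2 V) :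
    ecross (fun x => reflectMod N t (π x)) e f ↔ ecross π e f := by
  induction e using Sym2.ind with | _ a b =>
  induction f using Sym2.ind with | _ c d =>
  simp only [ecross_mk_iff_sbtw, sbtw_reflectMod (hN _) (hN _) (hN _)]
  tauto

lemma IsOuterKPlanar.comp_reflectMod {G : SimpleGraph V} {k : ℕ} {π : V → ℕ}
    (hD : IsOuterKPlanar G k π) {N : ℕ} (hN : ∀ x, π x < N) (t : ℕ) :
    IsOuterKPlanar G k (fun x => reflectMod N t (π x)) := by
  refine ⟨fun x y h => hD.1 (reflectMod_injOn (hN x) (hN y) h), fun e he => ?_⟩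
  simpa only [crossNum, ecross_reflectMod hN] using hD.2 e he

end CyclicOrder

namespace SimpleGraph.Walk

variable {V : Type*} {G : SimpleGraph V} {u v : V}

lemma exists_mem_edges_ecross {π : V → ℕ} (hπ : Injective π) {a b x y : V}
    (p : G.Walk x y) (ha : a ∉ p.support) (hb : b ∉ p.support)
    (hx : π a < π x ∧ π x < π b) (hy : π y < π a ∨ π b < π y) :
    ∃ f ∈ p.edges, ecross π s(a, b) f := by
  obtain ⟨d, hd, hin, hout⟩ := p.exists_boundary_dart {z | π a < π z ∧ π z < π b} hx
    (by simp only [Set.mem_ofPred_eq]; omega)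
  have hdsupp := p.dart_snd_mem_support_of_mem_darts hd
  have hda : π d.snd ≠ π a := fun h => ha (hπ h ▸ hdsupp)
  have hdb : π d.snd ≠ π b := fun h => hb (hπ h ▸ hdsupp)
  refine ⟨d.edge, List.mem_map_of_mem hd, ?_⟩
  simp only [Set.mem_ofPred_eq] at hin hout
  simp only [Dart.edge, ecross, elo, ehi, Sym2.lift_mk]
  omega

lemma IsPath.start_notMem_support_tail {p : G.Walk u v} (hp : p.IsPath) (hnil : ¬p.Nil) :
    u ∉ p.tail.support := by
  have := hp.support_nodup
  rw [← cons_tail_support, List.nodup_cons] at this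
  rw [support_tail_of_not_nil _ hnil]
  exact this.1

lemma IsPath.eq_of_snd_eq_end {p q : G.Walk u v} (hp : p.IsPath) (hq : q.IsPath) (huv : u ≠ v)
    (hps : p.snd = v) (hqs : q.snd = v) : p = q := by
  have hpe := p.mk_start_snd_mem_edges (not_nil_of_ne huv)
  have hqe := q.mk_start_snd_mem_edges (not_nil_of_ne huv)
  rw [hps] at hpe
  rw [hqs] at hqe
  rw [hp.eq_adj_toWalk_of_mem_edges hpe, hq.eq_adj_toWalk_of_mem_edges hqe]

end SimpleGraph.Walk

section Paths

variable {V ι : Type*} {G : SimpleGraph V} {u v : V}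

def PairwiseInternallyDisjoint (P : ι → G.Walk u v) : Prop :=
  ∀ i j, i ≠ j → ∀ x, x ∈ (P i).support → x ∈ (P j).support → x = u ∨ x = v

lemma PairwiseInternallyDisjoint.notMem_support {P : ι → G.Walk u v}
    (hP : PairwiseInternallyDisjoint P) {i j : ι} (hij : i ≠ j) {x : V}
    (hx : x ∈ (P i).support) (hxu : x ≠ u) (hxv : x ≠ v) : x ∉ (P j).support :=
  fun hxj => by rcases hP i j hij x hx hxj with h | h <;> contradiction

lemma not_ecross_of_mem_of_mem {π : V → ℕ} {e f : Sym2 V} {x : V} (he : x ∈ e)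
    (hf : x ∈ f) : ¬ecross π e f := by
  obtain ⟨a, rfl⟩ := Sym2.mem_iff_exists.mp he
  obtain ⟨b, rfl⟩ := Sym2.mem_iff_exists.mp hf
  simp only [ecross, elo, ehi, Sym2.lift_mk]
  omega

/-- Distinct paths cross `e` along distinct edges: a common edge joins `u` to `v`, and an edge
at `u` does not cross a chord at `u`. -/
lemma card_le_crossNum [Finite V] {π : V → ℕ} {P : ι → G.Walk u v}
    (hP : PairwiseInternallyDisjoint P) {e : Sym2 V} (hu : u ∈ e) (S : Finset ι)
    (hS : ∀ j ∈ S, ∃ f ∈ (P j).edges, ecross π e f) :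
    S.card ≤ crossNum G π e := by
  have hfin : {f | f ∈ G.edgeSet ∧ ecross π e f}.Finite := Set.toFinite _
  rw [crossNum, Set.ncard_eq_toFinset_card _ hfin]
  refine Finset.card_le_card_of_forall_subsingleton
    (fun j f => f ∈ (P j).edges ∧ ecross π e f) (fun j hj => ?_) (fun f _ => ?_)
  · obtain ⟨f, hf, hcr⟩ := hS j hj
    exact ⟨f, by simp [(P j).edges_subset_edgeSet hf, hcr], hf, hcr⟩
  · rintro i ⟨-, hfi, hcr⟩ j ⟨-, hfj, -⟩
    by_contra hij
    induction f using Sym2.ind with | _ a b =>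
    have hab : a ≠ b := ((P i).adj_of_mem_edges hfi).ne
    have ha := hP i j hij a ((P i).fst_mem_support_of_mem_edges hfi)
      ((P j).fst_mem_support_of_mem_edges hfj)
    have hb := hP i j hij b ((P i).snd_mem_support_of_mem_edges hfi)
      ((P j).snd_mem_support_of_mem_edges hfj)
    have hub : u ∈ s(a, b) := by
      rcases ha with rfl | rfl <;> rcases hb with rfl | rfl <;> simp_all
    exact not_ecross_of_mem_of_mem hu hub hcr

end Paths

/-- Take the path whose first inner vertex `w` is the last one on the arc from `u` to `v`:
every other path counted here runs from inside the chord `uw` to `v` outside it. -/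
lemma card_le_of_snd_mem_Ioo {V ι : Type*} [Finite V] [DecidableEq ι] {G : SimpleGraph V}
    {k : ℕ} {π : V → ℕ} (hD : IsOuterKPlanar G k π) {u v : V} {P : ι → G.Walk u v}
    (hpath : ∀ i, (P i).IsPath) (hP : PairwiseInternallyDisjoint P) (S : Finset ι)
    (hS : ∀ j ∈ S, π (P j).snd ∈ Set.Ioo (π u) (π v)) :
    S.card ≤ k + 1 := by
  rcases S.eq_empty_or_nonempty with rfl | hne
  · simp
  obtain ⟨j₀, hj₀, hmax⟩ := S.exists_max_image (fun j => π (P j).snd) hne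
  set w := (P j₀).snd
  obtain ⟨huw, hwv⟩ : π u < π w ∧ π w < π v := hS j₀ hj₀
  have hnil (j : ι) : ¬(P j).Nil := Walk.not_nil_of_ne (by rintro rfl; omega)
  have hw_supp : w ∈ (P j₀).support := (P j₀).getVert_mem_support 1
  have hcross : ∀ j ∈ S.erase j₀, ∃ f ∈ (P j).edges, ecross π s(u, w) f := by
    intro j hj
    obtain ⟨hne, hjS⟩ := Finset.mem_erase.mp hj
    have hw_notMem : w ∉ (P j).support := hP.notMem_support (Ne.symm hne) hw_supp
      (ne_of_apply_ne π huw.ne') (ne_of_apply_ne π hwv.ne)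
    have hlt : π (P j).snd < π w := (hmax j hjS).lt_of_ne fun h =>
      hw_notMem (hD.1 h ▸ (P j).getVert_mem_support 1)
    rw [← (P j).cons_tail_eq (hnil j), Walk.edges_cons]
    rw [← (P j).cons_tail_eq (hnil j), Walk.support_cons, List.mem_cons, not_or] at hw_notMem
    obtain ⟨f, hf, hcr⟩ := (P j).tail.exists_mem_edges_ecross hD.1
      ((hpath j).start_notMem_support_tail (hnil j)) hw_notMem.2 ⟨(hS j hjS).1, hlt⟩
      (Or.inr hwv)
    exact ⟨f, List.mem_cons_of_mem _ hf, hcr⟩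
  have hcard := (card_le_crossNum hP (Sym2.mem_mk_left u w) _ hcross).trans
    (hD.2 _ ((P j₀).adj_snd (hnil j₀)))
  rw [Finset.card_erase_of_mem hj₀] at hcard
  omega

/-- In a graph with an outer `k`-planar drawing there are at most `2k+3`
pairwise internally vertex-disjoint paths between two distinct vertices. -/
theorem stmt4 {V : Type*} [Fintype V] (G : SimpleGraph V) (k : ℕ)
    (π : V → ℕ) (hD : IsOuterKPlanar G k π)
    (u v : V) (huv : u ≠ v) (m : ℕ) (P : Fin m → G.Walk u v)
    (hpath : ∀ i, (P i).IsPath) (hinj : Function.Injective P)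
    (hdisj : ∀ i j, i ≠ j → ∀ x, x ∈ (P i).support → x ∈ (P j).support →
      x = u ∨ x = v) :
    m ≤ 2 * k + 3 := by
  classical
  obtain ⟨N, hN⟩ : ∃ N, ∀ x, π x < N :=
    ⟨Finset.univ.sup π + 1, fun x => Nat.lt_succ_of_le (Finset.le_sup (Finset.mem_univ x))⟩
  -- `σ` puts `u` first; reflecting once more reverses the direction around the circle.
  set σ : V → ℕ := fun x => reflectMod N (π u) (π x)
  have hσN (x : V) : σ x < N := reflectMod_lt (hN u) (hN x)
  have hσ : IsOuterKPlanar G k σ := hD.comp_reflectMod hN _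
  have hσ' := hσ.comp_reflectMod hσN 0
  set direct := Finset.univ.filter fun j => (P j).snd = v
  set forward := Finset.univ.filter fun j => σ (P j).snd ∈ Set.Ioo (σ u) (σ v)
  set backward := Finset.univ.filter fun j =>
    reflectMod N 0 (σ (P j).snd) ∈ Set.Ioo (reflectMod N 0 (σ u)) (reflectMod N 0 (σ v))
  have hcover : Finset.univ ⊆ direct ∪ forward ∪ backward := by
    intro j _
    have hu : σ u = 0 := reflectMod_self N (π u)
    have hwu : (P j).snd ≠ u := ((P j).adj_snd (Walk.not_nil_of_ne huv)).ne'
    by_cases hwv : (P j).snd = v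
    · simp [direct, hwv]
    rcases mem_Ioo_or_reflectMod_mem_Ioo (hσN _) (hσN v) (hu ▸ hσ.1.ne hwu)
      (hu ▸ hσ.1.ne huv.symm) (hσ.1.ne hwv) with h | h
    · exact Finset.mem_union_left _ <| Finset.mem_union_right _ <|
        Finset.mem_filter.mpr ⟨Finset.mem_univ _, hu ▸ h⟩
    · exact Finset.mem_union_right _ <| Finset.mem_filter.mpr ⟨Finset.mem_univ _, hu ▸ h⟩
  have hdirect : direct.card ≤ 1 := Finset.card_le_one.mpr fun i hi j hj =>
    hinj ((hpath i).eq_of_snd_eq_end (hpath j) huv (Finset.mem_filter.mp hi).2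
      (Finset.mem_filter.mp hj).2)
  have hforward := card_le_of_snd_mem_Ioo hσ hpath hdisj forward
    fun j hj => (Finset.mem_filter.mp hj).2
  have hbackward := card_le_of_snd_mem_Ioo hσ' hpath hdisj backward
    fun j hj => (Finset.mem_filter.mp hj).2
  calc m = (Finset.univ : Finset (Fin m)).card := (Finset.card_fin m).symm
    _ ≤ (direct ∪ forward ∪ backward).card := Finset.card_le_card hcover
    _ ≤ (direct ∪ forward).card + backward.card := Finset.card_union_le _ _
    _ ≤ direct.card + forward.card + backward.card := by gcongr; exact Finset.card_union_le _ _
    _ ≤ 2 * k + 3 := by omega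
end

section
/- Let b ≥ 1, let T be a tree with bandwidth at most b, and let G be the graph obtained from T by adding a new vertex w adjacent to all vertices of T. Then G admits an outer (5b−5)-planar drawing. More concretely, if (v_1,…,v_n) is a linear order of V(T) of bandwidth at most b, then the cyclic order (w, v_1, …, v_n) is an outer (5b−5)-planar drawing of G. -/
open Function

/-- The graph obtained from `T` by adding a new apex vertex (`none`) adjacent
to all vertices of `T`. -/
def addApex {V : Type*} (T : SimpleGraph V) : SimpleGraph (Option V) :=
  SimpleGraph.fromRel (fun a b =>
    (a = none ∧ b ≠ none) ∨ (∃ x y, a = some x ∧ b = some y ∧ T.Adj x y))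

/-- `T` has bandwidth at most `b`: some linear order of its vertices has all
edge stretches at most `b`. -/
def BandwidthLE {V : Type*} [Fintype V] (T : SimpleGraph V) (b : ℕ) : Prop :=
  ∃ σ : V ≃ Fin (Fintype.card V), ∀ u v, T.Adj u v →
    (σ u : ℕ) ≤ (σ v : ℕ) + b ∧ (σ v : ℕ) ≤ (σ u : ℕ) + b

/-!
Put the apex first and the tree in its bandwidth order. In a forest one can pick an endpoint of
every edge injectively, so a set of tree edges whose endpoints all lie in a window of `k`
positions has at most `k` elements. A tree edge crossing a chord has an endpoint strictly inside
the chord and the other within distance `b`, which confines it to a window of at most `2(b-1)`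
positions around an apex chord and `3(b-1)` positions around a tree chord; a tree chord is crossed
by at most `b - 1` apex edges more, and apex edges never cross each other. So every edge has at
most `4(b-1) ≤ 5b-5` crossings.
-/

open SimpleGraph

namespace SimpleGraph

variable {V : Type*} {G : SimpleGraph V}

lemma IsTree.exists_parent (hG : G.IsTree) :
    ∃ parent : V → V, ∀ u v, G.Adj u v → parent u = v ∨ parent v = u := by
  classical
  obtain ⟨r⟩ := hG.connected.nonempty
  have : ∀ v, ∃ P : G.Walk v r, P.IsPath := fun v =>
    ⟨_, (hG.connected v r).some.bypass_isPath⟩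
  choose P hP using this
  refine ⟨fun v => (P v).snd, fun u v huv => ?_⟩
  by_cases hu : u ∈ (P v).support
  · exact Or.inr (hG.isAcyclic.eq_snd_of_adj_start (hP v) huv.symm hu).symm
  · have hv : v ∈ (P u).support := by
      simpa using hG.isAcyclic.mem_support_of_ne_mem_support_of_adj_of_isPath
        (hP u).reverse (hP v).reverse huv (by simpa using hu)
    exact Or.inl (hG.isAcyclic.eq_snd_of_adj_start (hP u) huv hv).symm

-- Embed the forest in a spanning tree and assign to each edge its endpoint farther from a root.
lemma IsAcyclic.exists_injOn_edgeSet (hG : G.IsAcyclic) :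
    ∃ c : Sym2 V → V, (∀ e ∈ G.edgeSet, c e ∈ e) ∧ Set.InjOn c G.edgeSet := by
  cases isEmpty_or_nonempty V
  · exact ⟨fun e => e.out.1, fun e => isEmptyElim e.out.1, fun e => isEmptyElim e.out.1⟩
  obtain ⟨F, hGF, -, hF⟩ := connected_top.exists_isTree_le_of_le_of_isAcyclic le_top hG
  obtain ⟨parent, hparent⟩ := hF.exists_parent
  set up : V → Sym2 V := fun v => s(v, parent v)
  have hrange : G.edgeSet ⊆ Set.range up := by
    intro e he
    induction e using Sym2.ind with
    | h u v =>
      rcases hparent u v (hGF he) with h | h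
      · exact ⟨u, by rw [← h]⟩
      · exact ⟨v, by rw [← h, Sym2.eq_swap]⟩
  have hup : ∀ e ∈ G.edgeSet, up (invFun up e) = e := fun e he => invFun_eq (hrange he)
  refine ⟨invFun up, fun e he => ?_, fun e₁ he₁ e₂ he₂ h => ?_⟩
  · have h := Sym2.mem_mk_left (invFun up e) (parent (invFun up e))
    rwa [show s(_, _) = e from hup e he] at h
  · rw [← hup e₁ he₁, ← hup e₂ he₂, h]

lemma IsAcyclic.ncard_le_ncard_of_forall_mem (hG : G.IsAcyclic) {S : Set (Sym2 V)}
    (hS : S ⊆ G.edgeSet) {U : Set V} (hU : U.Finite) (hSU : ∀ e ∈ S, ∀ x ∈ e, x ∈ U) :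
    S.ncard ≤ U.ncard := by
  obtain ⟨c, hc, hcinj⟩ := hG.exists_injOn_edgeSet
  exact Set.ncard_le_ncard_of_injOn c (fun e he => hSU e he _ (hc e (hS he)))
    (hcinj.mono hS) hU

lemma IsAcyclic.ncard_le_card_of_forall_mem (hG : G.IsAcyclic) {p : V → ℕ} (hp : Injective p)
    {S : Set (Sym2 V)} (hS : S ⊆ G.edgeSet) (W : Finset ℕ)
    (hSW : ∀ e ∈ S, ∀ x ∈ e, p x ∈ W) :
    S.ncard ≤ W.card := by
  calc S.ncard ≤ (p ⁻¹' W).ncard :=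
        hG.ncard_le_ncard_of_forall_mem hS (W.finite_toSet.preimage hp.injOn) hSW
    _ ≤ (W : Set ℕ).ncard :=
        Set.ncard_le_ncard_of_injOn p (fun _ hx => hx) hp.injOn W.finite_toSet
    _ = W.card := Set.ncard_coe_finset W

end SimpleGraph

section Apex

variable {V : Type*} {T : SimpleGraph V}

/-- The circular order `(w, v_1, …, v_n)`: the apex `none` at position `0`, and `v` right after it
at its position in `p`. -/
def apexFirst (p : V → ℕ) : Option V → ℕ := fun a => a.elim 0 (fun v => p v + 1)

lemma apexFirst_injective {p : V → ℕ} (hp : Injective p) : Injective (apexFirst p) := by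
  rintro (_ | u) (_ | v) h <;> simp only [apexFirst, Option.elim] at h
  · rfl
  · omega
  · omega
  · exact congrArg some (hp (by omega))

lemma IsOuterKPlanar.mono {G : SimpleGraph V} {k l : ℕ} {π : V → ℕ}
    (h : IsOuterKPlanar G k π) (hkl : k ≤ l) : IsOuterKPlanar G l π :=
  ⟨h.1, fun e he => (h.2 e he).trans hkl⟩

lemma edgeSet_addApex_subset (T : SimpleGraph V) :
    (addApex T).edgeSet ⊆
      Set.range (fun z => s(none, some z)) ∪ Sym2.map some '' T.edgeSet := by
  intro e he
  induction e using Sym2.ind with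
  | h a b =>
    simp only [mem_edgeSet, addApex, fromRel_adj] at he
    rcases a with _ | x <;> rcases b with _ | y
    · exact absurd rfl he.1
    · exact Or.inl ⟨y, rfl⟩
    · exact Or.inl ⟨x, Sym2.eq_swap⟩
    · right
      rcases he.2 with (⟨h, -⟩ | ⟨x', y', hx, hy, hxy⟩) | (⟨h, -⟩ | ⟨x', y', hy, hx, hxy⟩)
      · cases h
      · cases hx; cases hy; exact ⟨s(x, y), hxy, rfl⟩
      · cases h
      · cases hx; cases hy; exact ⟨s(x, y), hxy.symm, rfl⟩

lemma crossNum_addApex_le [Finite V] (T : SimpleGraph V) (π : Option V → ℕ)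
    (e : Sym2 (Option V)) :
    crossNum (addApex T) π e ≤ {z | ecross π e s(none, some z)}.ncard +
      {f | f ∈ T.edgeSet ∧ ecross π e (f.map some)}.ncard := by
  have hsub : {f | f ∈ (addApex T).edgeSet ∧ ecross π e f} ⊆
      (fun z => s(none, some z)) '' {z | ecross π e s(none, some z)} ∪
        Sym2.map some '' {f | f ∈ T.edgeSet ∧ ecross π e (f.map some)} := by
    rintro f ⟨hf, hcross⟩
    rcases edgeSet_addApex_subset T hf with ⟨z, rfl⟩ | ⟨g, hg, rfl⟩
    · exact Or.inl ⟨z, hcross, rfl⟩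
    · exact Or.inr ⟨g, ⟨hg, hcross⟩, rfl⟩
  calc crossNum (addApex T) π e
      ≤ ((fun z => s(none, some z)) '' {z | ecross π e s(none, some z)}).ncard +
          (Sym2.map some '' {f | f ∈ T.edgeSet ∧ ecross π e (f.map some)}).ncard :=
        (Set.ncard_le_ncard hsub (Set.toFinite _)).trans (Set.ncard_union_le _ _)
    _ ≤ _ :=
        add_le_add (Set.ncard_image_le (Set.toFinite _)) (Set.ncard_image_le (Set.toFinite _))

variable {p : V → ℕ} {b : ℕ}

lemma ncard_apexEdges_crossing_apexEdge (v : V) :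
    {z | ecross (apexFirst p) s(none, some v) s(none, some z)}.ncard = 0 := by
  convert Set.ncard_empty V
  ext z
  simp [ecross, elo, ehi, apexFirst]

lemma ncard_apexEdges_crossing_treeEdge (hp : Injective p) {u v : V}
    (huv : p u ≤ p v + b ∧ p v ≤ p u + b) :
    {z | ecross (apexFirst p) s(some u, some v) s(none, some z)}.ncard ≤ b - 1 := by
  calc _ ≤ (p ⁻¹' Finset.Ioo (min (p u) (p v)) (max (p u) (p v))).ncard := by
        refine Set.ncard_le_ncard (fun z hz => ?_) ((Finset.finite_toSet _).preimage hp.injOn)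
        simp only [Set.mem_ofPred_eq, ecross, elo, ehi, Sym2.lift_mk, apexFirst, Option.elim] at hz
        simp only [Set.mem_preimage, Finset.coe_Ioo, Set.mem_Ioo]
        omega
    _ ≤ (Finset.Ioo (min (p u) (p v)) (max (p u) (p v)) : Set ℕ).ncard :=
        Set.ncard_le_ncard_of_injOn p (fun _ hx => hx) hp.injOn (Finset.finite_toSet _)
    _ ≤ b - 1 := by
        rw [Set.ncard_coe_finset, Nat.card_Ioo]
        omega

lemma ncard_treeEdges_crossing_apexEdge (hT : T.IsAcyclic) (hp : Injective p)
    (hband : ∀ u v, T.Adj u v → p u ≤ p v + b ∧ p v ≤ p u + b) (v : V) :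
    {f | f ∈ T.edgeSet ∧ ecross (apexFirst p) s(none, some v) (f.map some)}.ncard ≤
      2 * (b - 1) := by
  calc _ ≤ (Finset.Ico (p v + 1 - b) (p v) ∪ Finset.Ioo (p v) (p v + b)).card := by
        refine hT.ncard_le_card_of_forall_mem hp (fun f hf => hf.1) _ fun f ⟨hf, hcross⟩ => ?_
        induction f using Sym2.ind with
        | h x y =>
          have hxy := hband x y hf
          simp only [ecross, elo, ehi, Sym2.map_mk, Sym2.lift_mk, apexFirst, Option.elim] at hcross
          simp only [Sym2.mem_iff, Finset.mem_union, Finset.mem_Ico, Finset.mem_Ioo]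
          rintro z (rfl | rfl) <;> omega
    _ ≤ 2 * (b - 1) := by
        grw [Finset.card_union_le, Nat.card_Ico, Nat.card_Ioo]
        omega

lemma ncard_treeEdges_crossing_treeEdge (hT : T.IsAcyclic) (hp : Injective p)
    (hband : ∀ u v, T.Adj u v → p u ≤ p v + b ∧ p v ≤ p u + b) {u v : V}
    (huv : T.Adj u v) :
    {f | f ∈ T.edgeSet ∧ ecross (apexFirst p) s(some u, some v) (f.map some)}.ncard ≤
      3 * (b - 1) := by
  set m := min (p u) (p v)
  set M := max (p u) (p v)
  have hmM := hband u v huv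
  -- A crossing edge has one endpoint strictly between `m` and `M`, the other outside `[m, M]`
  -- and within `b` of the first.
  calc _ ≤ (Finset.Ico (m + 1 - b) m ∪ Finset.Ioo m M ∪ Finset.Ioo M (M + b)).card := by
        refine hT.ncard_le_card_of_forall_mem hp (fun f hf => hf.1) _ fun f ⟨hf, hcross⟩ => ?_
        induction f using Sym2.ind with
        | h x y =>
          have hxy := hband x y hf
          simp only [ecross, elo, ehi, Sym2.map_mk, Sym2.lift_mk, apexFirst, Option.elim] at hcross
          simp only [Sym2.mem_iff, Finset.mem_union, Finset.mem_Ico, Finset.mem_Ioo]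
          rintro z (rfl | rfl) <;> omega
    _ ≤ 3 * (b - 1) := by
        grw [Finset.card_union_le, Finset.card_union_le, Nat.card_Ico, Nat.card_Ioo, Nat.card_Ioo]
        omega

theorem isOuterKPlanar_addApex_apexFirst [Finite V] (hT : T.IsAcyclic) (hp : Injective p)
    (hband : ∀ u v, T.Adj u v → p u ≤ p v + b ∧ p v ≤ p u + b) :
    IsOuterKPlanar (addApex T) (4 * (b - 1)) (apexFirst p) := by
  refine ⟨apexFirst_injective hp, fun e he => (crossNum_addApex_le T _ e).trans ?_⟩
  rcases edgeSet_addApex_subset T he with ⟨v, rfl⟩ | ⟨e, huv, rfl⟩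
  · grw [ncard_apexEdges_crossing_apexEdge, ncard_treeEdges_crossing_apexEdge hT hp hband]
    omega
  · induction e using Sym2.ind with
    | h u v =>
      grw [Sym2.map_mk, ncard_apexEdges_crossing_treeEdge hp (hband u v huv),
        ncard_treeEdges_crossing_treeEdge hT hp hband huv]
      omega

end Apex

theorem stmt6_general {V : Type*} [Fintype V] (T : SimpleGraph V) (hT : T.IsTree)
    (b : ℕ) (σ : V ≃ Fin (Fintype.card V))
    (hband : ∀ u v, T.Adj u v →
      (σ u : ℕ) ≤ (σ v : ℕ) + b ∧ (σ v : ℕ) ≤ (σ u : ℕ) + b) :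
    IsOuterKPlanar (addApex T) (5 * b - 5)
        (fun a => a.elim 0 (fun v => (σ v : ℕ) + 1)) ∧
    ∃ π : Option V → ℕ, IsOuterKPlanar (addApex T) (5 * b - 5) π := by
  have h := (isOuterKPlanar_addApex_apexFirst hT.isAcyclic
    (Fin.val_injective.comp σ.injective) hband).mono (by omega : 4 * (b - 1) ≤ 5 * b - 5)
  exact ⟨h, _, h⟩

/-- If a tree `T` has a vertex order `σ` of bandwidth at most `b` (with `b ≥ 1`),
then the apex extension of `T` admits an outer `(5b-5)`-planar drawing; more
concretely, the circular order `(w, v_1, …, v_n)` (apex first, then the vertices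
of `T` in the order `σ`) is such a drawing. -/
theorem stmt6 {V : Type*} [Fintype V] (T : SimpleGraph V) (hT : T.IsTree)
    (b : ℕ) (hb : 1 ≤ b) (σ : V ≃ Fin (Fintype.card V))
    (hband : ∀ u v, T.Adj u v →
      (σ u : ℕ) ≤ (σ v : ℕ) + b ∧ (σ v : ℕ) ≤ (σ u : ℕ) + b) :
    IsOuterKPlanar (addApex T) (5 * b - 5)
        (fun a => a.elim 0 (fun v => (σ v : ℕ) + 1)) ∧
    ∃ π : Option V → ℕ, IsOuterKPlanar (addApex T) (5 * b - 5) π :=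
  stmt6_general T hT b σ hband
end

section
/- Let T be a tree with vertex order (v_1,…,v_n) of bandwidth at most b, let w be a new vertex adjacent to all v_i, and consider the circular drawing D = (w, v_1, …, v_n) of the resulting graph G. Then every edge {w, v_i} incident to w crosses at most 2b−2 edges in D. -/
open Function

section Aux
open SimpleGraph

lemma aux_dist_ne {V : Type*} {T : SimpleGraph V} (hT : T.IsTree) (v : V)
    {x y : V} (h : T.Adj x y) : T.dist x v ≠ T.dist y v := by
  classical
  intro heq
  obtain ⟨p, hp⟩ := hT.isConnected.exists_walk_length_eq_dist x v
  obtain ⟨q, hq⟩ := hT.isConnected.exists_walk_length_eq_dist y v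
  have hd0 : T.dist x v ≠ 0 := by
    intro h0
    have hx : x = v := (hT.isConnected.dist_eq_zero_iff).mp h0
    have hy : y = v := (hT.isConnected.dist_eq_zero_iff).mp (heq ▸ h0)
    exact h.ne (hx.trans hy.symm)
  have hxq : x ∉ q.support := by
    intro hx
    have hlen : (q.takeUntil x hx).length + (q.dropUntil x hx).length = q.length := by
      rw [← Walk.length_append, q.take_spec hx]
    have htu : (q.takeUntil x hx).length ≠ 0 :=
      fun h0 => h.ne' (Walk.eq_of_length_eq_zero h0)
    have hdle := SimpleGraph.dist_le (q.dropUntil x hx)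
    omega
  have hpath2 : (Walk.cons h q).IsPath := by
    rw [Walk.cons_isPath_iff]
    exact ⟨q.isPath_of_length_eq_dist hq, hxq⟩
  have hpq := hT.IsAcyclic.path_unique ⟨p, p.isPath_of_length_eq_dist hp⟩ ⟨Walk.cons h q, hpath2⟩
  have hl : p.length = (Walk.cons h q).length :=
    congrArg (fun r : T.Path x v => r.1.length) hpq
  rw [Walk.length_cons] at hl
  omega

lemma aux_parent {V : Type*} {T : SimpleGraph V} (hT : T.IsTree) (v : V) {x y y' : V}
    (hxy : T.Adj x y) (hxy' : T.Adj x y')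
    (h1 : T.dist y v < T.dist x v) (h2 : T.dist y' v < T.dist x v) : y = y' := by
  classical
  obtain ⟨q, hq⟩ := hT.isConnected.exists_walk_length_eq_dist y v
  obtain ⟨q', hq'⟩ := hT.isConnected.exists_walk_length_eq_dist y' v
  have hxq : x ∉ q.support := by
    intro hx
    have := SimpleGraph.dist_le (q.dropUntil x hx)
    have := Walk.length_dropUntil_le q hx
    omega
  have hxq' : x ∉ q'.support := by
    intro hx
    have := SimpleGraph.dist_le (q'.dropUntil x hx)
    have := Walk.length_dropUntil_le q' hx
    omega
  have hp1 : (Walk.cons hxy q).IsPath := by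
    rw [Walk.cons_isPath_iff]; exact ⟨q.isPath_of_length_eq_dist hq, hxq⟩
  have hp2 : (Walk.cons hxy' q').IsPath := by
    rw [Walk.cons_isPath_iff]; exact ⟨q'.isPath_of_length_eq_dist hq', hxq'⟩
  have hpq := hT.IsAcyclic.path_unique ⟨Walk.cons hxy q, hp1⟩ ⟨Walk.cons hxy' q', hp2⟩
  have hs := congrArg (fun r : T.Path x v => r.1.support) hpq
  simp only at hs
  rw [Walk.support_cons, Walk.support_cons] at hs
  have hs2 : q.support = q'.support := by injection hs
  have := congrArg List.head? hs2
  rw [Walk.support_eq_cons q, Walk.support_eq_cons q'] at this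
  injection this

end Aux

/-- In the circular drawing `(w, v_1, …, v_n)` of the apex extension of a tree
`T` whose order has bandwidth at most `b`, every edge `{w, v_i}` incident to the
apex `w` crosses at most `2b - 2` edges. -/
theorem stmt7 {V : Type*} [Fintype V] (T : SimpleGraph V) (hT : T.IsTree)
    (b : ℕ) (σ : V ≃ Fin (Fintype.card V))
    (hband : ∀ u v, T.Adj u v →
      (σ u : ℕ) ≤ (σ v : ℕ) + b ∧ (σ v : ℕ) ≤ (σ u : ℕ) + b) :
    ∀ v : V,
      crossNum (addApex T) (fun a => a.elim 0 (fun z => (σ z : ℕ) + 1))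
        s(Option.none, Option.some v) ≤ 2 * b - 2 := by
  classical
  intro v
  set i := (σ v : ℕ) with hi
  set π : Option V → ℕ := fun a => a.elim 0 (fun z => (σ z : ℕ) + 1) with hπ
  set C : Set (Sym2 (Option V)) :=
    {f | f ∈ (addApex T).edgeSet ∧ ecross π s(Option.none, Option.some v) f} with hC
  show C.ncard ≤ 2 * b - 2
  set S : Finset V := Finset.univ.filter
    (fun z => (σ z : ℕ) ≠ i ∧ i < (σ z : ℕ) + b ∧ (σ z : ℕ) < i + b) with hS
  -- characterization of crossing edges
  have hkey : ∀ f ∈ C, ∃ x y : V, f = s(Option.some x, Option.some y) ∧ T.Adj x y ∧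
      (σ x : ℕ) < i ∧ i < (σ y : ℕ) := by
    intro f
    induction f using Sym2.ind with
    | _ a b =>
      intro hf
      obtain ⟨hE, hX⟩ := hf
      rw [SimpleGraph.mem_edgeSet, addApex, SimpleGraph.fromRel_adj] at hE
      obtain ⟨hne, hrel⟩ := hE
      simp only [ecross, elo, ehi, Sym2.lift_mk, hπ, Option.elim] at hX
      match a, b with
      | Option.none, bb => simp at hX
      | Option.some x, Option.none => simp at hX
      | Option.some x, Option.some y =>
        have hadj : T.Adj x y := by
          rcases hrel with (⟨h, _⟩ | ⟨p, q, hp, hq, h⟩) | (⟨h, _⟩ | ⟨p, q, hp, hq, h⟩)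
          · exact absurd h (by simp)
          · cases hp; cases hq; exact h
          · exact absurd h (by simp)
          · cases hp; cases hq; exact h.symm
        simp only [Option.elim] at hX
        have hmm : min (σ x : ℕ) (σ y : ℕ) < i ∧ i < max (σ x : ℕ) (σ y : ℕ) := by
          rcases hX with ⟨h1, h2, h3⟩ | ⟨h1, h2, h3⟩ <;> omega
        rcases le_total (σ x : ℕ) (σ y : ℕ) with hle | hle
        · exact ⟨x, y, rfl, hadj, by omega, by omega⟩
        · exact ⟨y, x, Sym2.eq_swap, hadj.symm, by omega, by omega⟩
  -- the "far endpoint" selector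
  set far : V → V → V := fun x y =>
    if T.dist y v < T.dist x v then x else if T.dist x v < T.dist y v then y else v with hfar
  have hfarc : ∀ x y, far x y = far y x := by
    intro x y
    simp only [hfar]
    split_ifs <;> first | rfl | omega
  set g : Sym2 (Option V) → V :=
    Sym2.lift ⟨fun a b => far (a.getD v) (b.getD v), fun a b => hfarc _ _⟩ with hg
  have hgmk : ∀ x y : V, g s(Option.some x, Option.some y) = far x y := by
    intro x y; simp [hg]
  have hfarspec : ∀ {x y : V}, T.Adj x y →
      (far x y = x ∧ T.dist y v < T.dist x v) ∨ (far x y = y ∧ T.dist x v < T.dist y v) := by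
    intro x y hxy
    have hne := aux_dist_ne hT v hxy
    rcases lt_or_gt_of_ne hne with h | h
    · right
      refine ⟨?_, h⟩
      simp only [hfar]
      rw [if_neg (by omega), if_pos h]
    · left
      refine ⟨?_, h⟩
      simp only [hfar]
      rw [if_pos h]
  have hinj : Set.InjOn g C := by
    intro f1 h1 f2 h2 hgf
    obtain ⟨x1, y1, rfl, ha1, hx1, hy1⟩ := hkey f1 h1
    obtain ⟨x2, y2, rfl, ha2, hx2, hy2⟩ := hkey f2 h2
    rw [hgmk, hgmk] at hgf
    rcases hfarspec ha1 with ⟨e1, d1⟩ | ⟨e1, d1⟩ <;>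
      rcases hfarspec ha2 with ⟨e2, d2⟩ | ⟨e2, d2⟩ <;>
      rw [e1, e2] at hgf
    · subst hgf
      rw [aux_parent hT v ha1 ha2 d1 d2]
    · subst hgf
      rw [aux_parent hT v ha1 ha2.symm d1 d2]
      exact Sym2.eq_swap
    · subst hgf
      rw [aux_parent hT v ha1.symm ha2 d1 d2]
      exact Sym2.eq_swap
    · subst hgf
      rw [aux_parent hT v ha1.symm ha2.symm d1 d2]
  have hmemS : ∀ {z x y : V}, T.Adj x y → (σ x : ℕ) < i → i < (σ y : ℕ) →
      (z = x ∨ z = y) → z ∈ S := by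
    intro z x y hadj hx hy hz
    have hb := hband x y hadj
    simp only [hS, Finset.mem_filter, Finset.mem_univ, true_and]
    rcases hz with rfl | rfl <;> omega
  have hsub : g '' C ⊆ (↑S : Set V) := by
    rintro z ⟨f, hf, rfl⟩
    obtain ⟨x, y, rfl, hadj, hx, hy⟩ := hkey f hf
    rw [hgmk]
    rcases hfarspec hadj with ⟨e1, _⟩ | ⟨e1, _⟩ <;> rw [e1]
    · exact hmemS hadj hx hy (Or.inl rfl)
    · exact hmemS hadj hx hy (Or.inr rfl)
  have hScard : S.card ≤ 2 * b - 2 := by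
    have hinjσ : Function.Injective (fun z : V => (σ z : ℕ)) := by
      intro a b hab
      exact σ.injective (Fin.val_injective hab)
    have himg2 : S.image (fun z => (σ z : ℕ)) ⊆ (Finset.Ico (i + 1 - b) (i + b)).erase i := by
      intro j hj
      obtain ⟨z, hz, rfl⟩ := Finset.mem_image.mp hj
      simp only [hS, Finset.mem_filter, Finset.mem_univ, true_and] at hz
      simp only [Finset.mem_erase, Finset.mem_Ico]
      omega
    have hcardimg : (S.image (fun z => (σ z : ℕ))).card = S.card :=
      Finset.card_image_of_injective S hinjσ
    have hle := Finset.card_le_card himg2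
    have hico : ((Finset.Ico (i + 1 - b) (i + b)).erase i).card ≤ 2 * b - 2 := by
      rcases Nat.eq_zero_or_pos b with rfl | hb
      · have : Finset.Ico (i + 1 - 0) (i + 0) = ∅ := Finset.Ico_eq_empty (by omega)
        rw [this]
        simp
      · have hmem : i ∈ Finset.Ico (i + 1 - b) (i + b) := by
          simp only [Finset.mem_Ico]; omega
        rw [Finset.card_erase_of_mem hmem, Nat.card_Ico]
        omega
    omega
  calc C.ncard = (g '' C).ncard := (Set.ncard_image_of_injOn hinj).symm
    _ ≤ (↑S : Set V).ncard := Set.ncard_le_ncard hsub (S.finite_toSet)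
    _ = S.card := Set.ncard_coe_finset S
    _ ≤ 2 * b - 2 := hScard
end

section
/- Let G be a biconnected graph with an outer k-planar drawing, and let u, v be two distinct vertices of G. Then the number of connected components of G − {u, v} is at most 2k + 3. -/
open Function

/-- `G` is biconnected: connected and without cutvertices. -/
def Biconnected {V : Type*} (G : SimpleGraph V) : Prop :=
  G.Connected ∧ ∀ x : V, (G.induce {y : V | y ≠ x}).Connected

/-!
Every component of `G - {u, v}` contains a neighbour of `u` and a neighbour of `v`, hence a walk
from a neighbour of `u` to `v` all of whose vertices other than `v` lie in the component. Fix one of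
the two arcs into which the chord `uv` cuts the circle and let `z` be the neighbour of `u` on it
farthest from `u`. Any other component with a neighbour `y` of `u` on that arc has `y` between `u`
and `z`, so its walk from `y` to `v` crosses the edge `uz` along an edge meeting the component. An
edge meets at most one component, so at most `k + 1` components have a neighbour of `u` on the arc.
Cutting the circle open at the other endpoint of the chord turns the second arc into the first.
-/

open SimpleGraph

section

variable {V : Type*}

theorem elo_mk (π : V → ℕ) (a b : V) : elo π s(a, b) = min (π a) (π b) := rfl

theorem ehi_mk (π : V → ℕ) (a b : V) : ehi π s(a, b) = max (π a) (π b) := rfl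

/-- Of the two arcs into which the chord `e` cuts the circle, the one not passing through the
cut point between the largest and the smallest position. -/
def InsideChord (π : V → ℕ) (e : Sym2 V) (x : V) : Prop :=
  elo π e < π x ∧ π x < ehi π e

/-- The same circular order, cut open at position `c` instead of `0`: positions below `c` are
moved past `N`, which is meant to exceed every position. -/
def rotate (π : V → ℕ) (c N : ℕ) (w : V) : ℕ :=
  if π w < c then π w + N else π w - c

section Rotate

variable {π : V → ℕ} {c N : ℕ}

theorem ecross_rotate (hN : ∀ w, π w < N) (e f : Sym2 V) :
    ecross (rotate π c N) e f ↔ ecross π e f := by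
  induction e using Sym2.ind with | _ a b =>
  induction f using Sym2.ind with | _ x y =>
  have := hN a; have := hN b; have := hN x; have := hN y
  simp only [ecross, elo_mk, ehi_mk, rotate]
  split_ifs <;> omega

theorem rotate_injective (hπ : Injective π) (hN : ∀ w, π w < N) : Injective (rotate π c N) := by
  intro a b h
  have := hN a; have := hN b
  apply hπ
  simp only [rotate] at h
  split_ifs at h <;> omega

theorem IsOuterKPlanar.rotate {G : SimpleGraph V} {k : ℕ} (h : IsOuterKPlanar G k π)
    (hN : ∀ w, π w < N) : IsOuterKPlanar G k (rotate π c N) := by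
  refine ⟨rotate_injective h.1 hN, fun e he => ?_⟩
  simpa only [crossNum, ecross_rotate hN] using h.2 e he

theorem insideChord_or_insideChord_rotate (hN : ∀ w, π w < N) {u v y : V} (huv : π u ≠ π v)
    (hu : π y ≠ π u) (hv : π y ≠ π v) :
    InsideChord π s(u, v) y ∨ InsideChord (rotate π (max (π u) (π v)) N) s(u, v) y := by
  have := hN u; have := hN v; have := hN y
  simp only [InsideChord, elo_mk, ehi_mk, rotate]
  split_ifs <;> omega

end Rotate

theorem ecross_mk_of_insideChord {π : V → ℕ} {a b x y : V} (hx : InsideChord π s(a, b) x)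
    (hy : ¬ InsideChord π s(a, b) y) (hya : π y ≠ π a) (hyb : π y ≠ π b) :
    ecross π s(a, b) s(x, y) := by
  simp only [InsideChord, ecross, elo_mk, ehi_mk] at hx hy ⊢
  omega

theorem SimpleGraph.Walk.exists_ecross_of_insideChord {G : SimpleGraph V} {π : V → ℕ}
    (hπ : Injective π) {a b x y : V} (w : G.Walk x y) (hx : InsideChord π s(a, b) x)
    (hy : ¬ InsideChord π s(a, b) y) (ha : a ∉ w.support) (hb : b ∉ w.support) :
    ∃ f ∈ w.edges, ecross π s(a, b) f := by
  induction w with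
  | nil => exact absurd hx hy
  | @cons x r y _ w ih =>
    rw [Walk.support_cons, List.mem_cons, not_or] at ha hb
    by_cases hr : InsideChord π s(a, b) r
    · obtain ⟨f, hf, hcross⟩ := ih hr hy ha.2 hb.2
      exact ⟨f, by simp [hf], hcross⟩
    · refine ⟨s(x, r), by simp, ecross_mk_of_insideChord hx hr ?_ ?_⟩
      · exact hπ.ne fun h => ha.2 (h ▸ w.start_mem_support)
      · exact hπ.ne fun h => hb.2 (h ▸ w.start_mem_support)

namespace SimpleGraph.ConnectedComponent

variable {G : SimpleGraph V} {S : Set V}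

theorem eq_of_coe_mem_edge {f : Sym2 V} (hf : f ∈ G.edgeSet)
    {K K' : (G.induce S).ConnectedComponent} {x x' : S} (hx : x ∈ K) (hx' : x' ∈ K')
    (hxf : (x : V) ∈ f) (hx'f : (x' : V) ∈ f) : K = K' := by
  by_cases h : x = x'
  · subst h
    exact eq_of_common_vertex hx hx'
  · obtain rfl := (Sym2.mem_and_mem_iff (Subtype.val_injective.ne h)).mp ⟨hxf, hx'f⟩
    have hadj : (G.induce S).Adj x x' := hf
    exact eq_of_common_vertex hx ((K'.mem_supp_congr_adj hadj).mpr hx')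

theorem ncard_le_crossNum_add_one [Finite V] (π : V → ℕ) (e : Sym2 V)
    (𝒦 : Set (G.induce S).ConnectedComponent) (K₀ : (G.induce S).ConnectedComponent)
    (h : ∀ K ∈ 𝒦, K ≠ K₀ → ∃ f ∈ G.edgeSet, ecross π e f ∧ ∃ x ∈ K, (x : V) ∈ f) :
    𝒦.ncard ≤ crossNum G π e + 1 := by
  have : Nonempty (Sym2 V) := ⟨e⟩
  choose! F hFedge hFcross hFmeets using h
  have hinj : Set.InjOn F (𝒦 \ {K₀}) := by
    intro K hK K' hK' hKK'
    obtain ⟨x, hxK, hxf⟩ := hFmeets K hK.1 hK.2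
    obtain ⟨x', hx'K', hx'f⟩ := hFmeets K' hK'.1 hK'.2
    exact eq_of_coe_mem_edge (hFedge K hK.1 hK.2) hxK hx'K' hxf (hKK' ▸ hx'f)
  calc 𝒦.ncard ≤ (insert K₀ (𝒦 \ {K₀})).ncard :=
        Set.ncard_le_ncard (Set.subset_insert_sdiff_singleton _ _)
    _ ≤ (𝒦 \ {K₀}).ncard + 1 := Set.ncard_insert_le _ _
    _ ≤ crossNum G π e + 1 := by
      gcongr
      exact Set.ncard_le_ncard_of_injOn F
        (fun K hK => ⟨hFedge K hK.1 hK.2, hFcross K hK.1 hK.2⟩) hinj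

theorem exists_walk_of_mem_of_adj {K : (G.induce S).ConnectedComponent} {y d : S} (hy : y ∈ K)
    (hd : d ∈ K) {v : V} (hdv : G.Adj d v) :
    ∃ W : G.Walk y v, (∀ f ∈ W.edges, ∃ x ∈ K, (x : V) ∈ f) ∧
      ∀ x ∈ W.support, x = v ∨ ∃ x' ∈ K, (x' : V) = x := by
  classical
  obtain ⟨p⟩ : (G.induce S).Reachable y d := ConnectedComponent.exact (hy.trans hd.symm)
  have hp : ∀ x ∈ p.support, x ∈ K := fun x hx =>
    (ConnectedComponent.sound ⟨p.takeUntil x hx⟩).symm.trans hy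
  let ι : G.induce S →g G := (Embedding.induce S).toHom
  have hdv : G.Adj (ι d) v := hdv
  have hιy : ι y = y := rfl
  refine ⟨((p.map ι).concat hdv).copy hιy rfl, ?_, ?_⟩
  · intro f hf
    rw [Walk.edges_copy, Walk.edges_concat, List.concat_eq_append, List.mem_append,
      List.mem_singleton, Walk.edges_map, List.mem_map] at hf
    rcases hf with ⟨f', hf', rfl⟩ | rfl
    · induction f' using Sym2.ind with | _ a b =>
      exact ⟨a, hp a (p.fst_mem_support_of_mem_edges hf'), Sym2.mem_mk_left _ _⟩
    · exact ⟨d, hd, Sym2.mem_mk_left _ _⟩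
  · intro x hx
    rw [Walk.support_copy, Walk.support_concat, List.mem_append, List.mem_singleton,
      Walk.support_map, List.mem_map] at hx
    rcases hx with ⟨x', hx', rfl⟩ | rfl
    · exact Or.inr ⟨x', hp x' hx', rfl⟩
    · exact Or.inl rfl

theorem exists_adj_mem_of_induce_connected {T : Set V} {u : V} (hT : (G.induce T).Connected)
    (hST : S ⊆ T) (hTS : T \ S = {u}) (K : (G.induce S).ConnectedComponent) :
    ∃ y ∈ K, G.Adj u y := by
  obtain ⟨x, hx⟩ := K.nonempty_supp
  have hu : u ∈ T \ S := hTS ▸ Set.mem_singleton u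
  obtain ⟨p⟩ := hT.preconnected ⟨x, hST x.2⟩ ⟨u, hu.1⟩
  obtain ⟨d, -, ⟨hd₁, hK⟩, hd₂⟩ := p.exists_boundary_dart {a | ∃ h : (a : V) ∈ S, ⟨a, h⟩ ∈ K}
    ⟨x.2, hx⟩ fun ⟨h, _⟩ => hu.2 h
  have hadj : G.Adj d.fst d.snd := d.adj
  by_cases hS : (d.snd : V) ∈ S
  · have : (G.induce S).Adj ⟨_, hd₁⟩ ⟨_, hS⟩ := hadj
    exact absurd ⟨hS, (K.mem_supp_congr_adj this).mp hK⟩ hd₂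
  · have hdu : (d.snd : V) = u := by
      rw [← Set.mem_singleton_iff, ← hTS]
      exact ⟨d.snd.2, hS⟩
    exact ⟨⟨_, hd₁⟩, hK, hdu ▸ hadj.symm⟩

end SimpleGraph.ConnectedComponent

theorem ncard_components_adj_insideChord_le [Finite V] {G : SimpleGraph V} {k : ℕ} {π : V → ℕ}
    (hπ : IsOuterKPlanar G k π) {u v : V}
    (hv : ∀ K : (G.induce {w | w ≠ u ∧ w ≠ v}).ConnectedComponent, ∃ d ∈ K, G.Adj v d) :
    {K : (G.induce {w | w ≠ u ∧ w ≠ v}).ConnectedComponent |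
      ∃ y ∈ K, G.Adj u y ∧ InsideChord π s(u, v) y}.ncard ≤ k + 1 := by
  set S : Set V := {w | w ≠ u ∧ w ≠ v}
  set 𝒦 := {K : (G.induce S).ConnectedComponent | ∃ y ∈ K, G.Adj u y ∧ InsideChord π s(u, v) y}
  rcases 𝒦.eq_empty_or_nonempty with h𝒦 | ⟨-, y₁, -, hy₁⟩
  · simp [h𝒦]
  obtain ⟨z, hz, hzmax⟩ := Set.exists_max_image {y : S | G.Adj u y ∧ InsideChord π s(u, v) y}
    (fun y => Nat.dist (π u) (π y)) (Set.toFinite _) ⟨y₁, hy₁⟩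
  refine (ConnectedComponent.ncard_le_crossNum_add_one π s(u, z) 𝒦
    ((G.induce S).connectedComponentMk z) ?_).trans (Nat.add_le_add_right (hπ.2 s(u, z) hz.1) 1)
  rintro K ⟨y, hyK, hyu, hyin⟩ hK
  obtain ⟨d, hdK, hvd⟩ := hv K
  obtain ⟨W, hWedges, hWsupp⟩ := ConnectedComponent.exists_walk_of_mem_of_adj hyK hdK hvd.symm
  have hyz : π y ≠ π z := hπ.1.ne <| Subtype.val_injective.ne <| by
    rintro rfl
    exact hK hyK.symm
  have hy_in : InsideChord π s(u, z) y := by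
    have hzin := hz.2
    have hdist := hzmax y ⟨hyu, hyin⟩
    simp only [InsideChord, elo_mk, ehi_mk, Nat.dist] at hzin hdist hyin ⊢
    omega
  have hv_out : ¬ InsideChord π s(u, z) v := by
    have hzin := hz.2
    simp only [InsideChord, elo_mk, ehi_mk] at hzin ⊢
    omega
  have hu_W : u ∉ W.support := by
    intro hu
    rcases hWsupp u hu with rfl | ⟨x, -, hx⟩
    · simp only [InsideChord, elo_mk, ehi_mk] at hyin
      omega
    · exact x.2.1 hx
  have hz_W : (z : V) ∉ W.support := by
    intro hz
    rcases hWsupp z hz with h | ⟨x, hxK, hx⟩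
    · exact z.2.2 h
    · exact hK (Subtype.val_injective hx ▸ hxK).symm
  obtain ⟨f, hf, hcross⟩ := W.exists_ecross_of_insideChord hπ.1 hy_in hv_out hu_W hz_W
  exact ⟨f, W.edges_subset_edgeSet hf, hcross, hWedges f hf⟩

end

/-- If a biconnected graph `G` admits an outer `k`-planar drawing, then for any
two distinct vertices `u, v`, the graph `G - {u, v}` has at most `2k + 3`
connected components. -/
theorem stmt16 {V : Type*} [Fintype V] (G : SimpleGraph V) (k : ℕ)
    (hbi : Biconnected G)
    (hdraw : ∃ π : V → ℕ, IsOuterKPlanar G k π)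
    (u v : V) (huv : u ≠ v) :
    Nat.card ((G.induce {w : V | w ≠ u ∧ w ≠ v}).ConnectedComponent) ≤
      2 * k + 3 := by
  obtain ⟨π, hπ⟩ := hdraw
  have hU : ∀ K : (G.induce {w : V | w ≠ u ∧ w ≠ v}).ConnectedComponent, ∃ y ∈ K, G.Adj u y :=
    ConnectedComponent.exists_adj_mem_of_induce_connected (hbi.2 v) (fun _ h => h.2)
      (by ext w; simp; grind)
  have hV : ∀ K : (G.induce {w : V | w ≠ u ∧ w ≠ v}).ConnectedComponent, ∃ y ∈ K, G.Adj v y :=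
    ConnectedComponent.exists_adj_mem_of_induce_connected (hbi.2 u) (fun _ h => h.1)
      (by ext w; simp; grind)
  obtain ⟨N, hN⟩ : ∃ N, ∀ w, π w < N :=
    ⟨Finset.univ.sup π + 1, fun w => Nat.lt_succ_of_le (Finset.le_sup (Finset.mem_univ w))⟩
  set σ := rotate π (max (π u) (π v)) N
  have hcover : Set.univ ⊆
      {K : (G.induce {w : V | w ≠ u ∧ w ≠ v}).ConnectedComponent |
        ∃ y ∈ K, G.Adj u y ∧ InsideChord π s(u, v) y} ∪
      {K | ∃ y ∈ K, G.Adj u y ∧ InsideChord σ s(u, v) y} := by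
    intro K _
    obtain ⟨y, hyK, hyu⟩ := hU K
    exact (insideChord_or_insideChord_rotate hN (hπ.1.ne huv) (hπ.1.ne y.2.1)
      (hπ.1.ne y.2.2)).imp (fun h => ⟨y, hyK, hyu, h⟩) (fun h => ⟨y, hyK, hyu, h⟩)
  calc Nat.card _ = (Set.univ : Set _).ncard := (Set.ncard_univ _).symm
    _ ≤ _ := Set.ncard_le_ncard hcover
    _ ≤ _ := Set.ncard_union_le _ _
    _ ≤ (k + 1) + (k + 1) := add_le_add (ncard_components_adj_insideChord_le hπ hV)
        (ncard_components_adj_insideChord_le (hπ.rotate hN) hV)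
    _ ≤ 2 * k + 3 := by omega
end

section
/- A connected bipartite graph G admits a 2-layer 0-planar drawing (a 2-layer drawing with no crossings) if and only if G is a caterpillar. -/
open Function

/-- `G` is a caterpillar: a tree in which the non-leaf vertices (vertices of
degree at least 2) all lie on a single path. -/
def IsCaterpillar {V : Type*} [Fintype V] [DecidableEq V]
    (G : SimpleGraph V) [DecidableRel G.Adj] : Prop :=
  G.IsTree ∧ ∃ (u v : V) (w : G.Walk u v), w.IsPath ∧
    ∀ x : V, 2 ≤ G.degree x → x ∈ w.support

/-!
Crossing-freeness says that for edges `ab`, `cd` with `a`, `c` on the same layer, `a` left of `c`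
forces `b` not to be right of `d`. At the rightmost vertex of a cycle this forces its two cycle
neighbours to coincide, so `G` is a tree; at a vertex with three non-leaf neighbours, the second
neighbour of the middle one fits neither left nor right of it. In a tree where no vertex has three
non-leaf neighbours, every non-leaf lies on the path between two farthest apart non-leaves: a
non-leaf hanging off that path would extend it or give its attachment vertex three non-leaf
neighbours. Conversely, lay a caterpillar out spine vertex by spine vertex, each followed by its
leaves: edges meeting the same block all contain its spine vertex, so disjoint edges occupy
separated ranges of blocks and cannot cross.
-/

namespace SimpleGraph

variable {V : Type*} {G : SimpleGraph V} {u v x : V}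

lemma IsAcyclic.length_eq_dist_of_isPath (hG : G.IsAcyclic) {p : G.Walk u v} (hp : p.IsPath) :
    p.length = G.dist u v := by
  obtain ⟨q, hq, hql⟩ := p.reachable.exists_path_of_dist
  have : p = q := congrArg Subtype.val ((hG.subsingleton_path u v).elim ⟨p, hp⟩ ⟨q, hq⟩)
  rw [this, hql]

lemma IsAcyclic.dist_getVert_of_isPath (hG : G.IsAcyclic) {p : G.Walk u v} (hp : p.IsPath)
    {i : ℕ} (hi : i ≤ p.length) : G.dist u (p.getVert i) = i := by
  rw [← hG.length_eq_dist_of_isPath (hp.take i), Walk.take_length, min_eq_left hi]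

lemma IsAcyclic.dist_lt_dist_of_adj_of_notMem_support (hG : G.IsAcyclic) {p : G.Walk u v}
    (hp : p.IsPath) {y : V} (hyu : G.Adj y u) (hy : y ∉ p.support) :
    G.dist u v < G.dist y v := by
  rw [← hG.length_eq_dist_of_isPath hp, ← hG.length_eq_dist_of_isPath (hp.cons hy (h := hyu)),
    Walk.length_cons]
  exact Nat.lt_succ_self _

namespace Walk

lemma adj_getVert_pred (p : G.Walk u v) {i : ℕ} (hi₀ : 0 < i) (hi : i ≤ p.length) :
    G.Adj (p.getVert (i - 1)) (p.getVert i) := by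
  simpa [Nat.sub_add_cancel hi₀] using p.adj_getVert_succ (i := i - 1) (by omega)

lemma IsPath.getVert_pred_ne_getVert_succ {p : G.Walk u v} (hp : p.IsPath) {i : ℕ}
    (hi₀ : 0 < i) (hi : i < p.length) : p.getVert (i - 1) ≠ p.getVert (i + 1) := fun h => by
  have := hp.getVert_injOn (by simp; omega) (by simp; omega) h
  omega

end Walk

section Degree

variable [Fintype V] [DecidableRel G.Adj]

lemma two_le_degree_iff : 2 ≤ G.degree x ↔ ∃ a b, G.Adj x a ∧ G.Adj x b ∧ a ≠ b := by
  rw [← card_neighborFinset_eq_degree, Nat.succ_le_iff, Finset.one_lt_card_iff]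
  simp only [mem_neighborFinset]

lemma two_le_degree_of_adj_of_adj {a b : V} (ha : G.Adj x a) (hb : G.Adj x b) (hab : a ≠ b) :
    2 ≤ G.degree x :=
  two_le_degree_iff.mpr ⟨a, b, ha, hb, hab⟩

lemma eq_of_adj_of_adj_of_degree_le_one {a b : V} (hx : G.degree x ≤ 1) (ha : G.Adj x a)
    (hb : G.Adj x b) : a = b := by
  by_contra hab
  have := two_le_degree_of_adj_of_adj ha hb hab
  omega

lemma exists_adj_ne_of_two_le_degree (hx : 2 ≤ G.degree x) (w : V) :
    ∃ z, G.Adj x z ∧ z ≠ w := by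
  obtain ⟨a, b, ha, hb, hab⟩ := two_le_degree_iff.mp hx
  by_cases haw : a = w
  · exact ⟨b, hb, fun hbw => hab (haw.trans hbw.symm)⟩
  · exact ⟨a, ha, haw⟩

namespace Walk

lemma IsPath.two_le_degree_getVert {p : G.Walk u v} (hp : p.IsPath) {i : ℕ} (hi₀ : 0 < i)
    (hi : i < p.length) : 2 ≤ G.degree (p.getVert i) :=
  two_le_degree_of_adj_of_adj (p.adj_getVert_pred hi₀ hi.le).symm (p.adj_getVert_succ hi)
    (hp.getVert_pred_ne_getVert_succ hi₀ hi)

lemma IsPath.two_le_degree_getVert_of_two_le_degree {p : G.Walk u v} (hp : p.IsPath)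
    (hu : 2 ≤ G.degree u) (hv : 2 ≤ G.degree v) (i : ℕ) : 2 ≤ G.degree (p.getVert i) := by
  rcases i.eq_zero_or_pos with rfl | hi₀
  · rwa [p.getVert_zero]
  rcases lt_or_ge i p.length with hi | hi
  · exact hp.two_le_degree_getVert hi₀ hi
  · rwa [p.getVert_of_length_le hi]

lemma exists_two_le_degree_adj_mem_support (hconn : G.Connected) (p : G.Walk u v)
    (hx : x ∉ p.support) (hdx : 2 ≤ G.degree x) :
    ∃ y m, G.Adj y m ∧ m ∈ p.support ∧ y ∉ p.support ∧ 2 ≤ G.degree y := by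
  classical
  obtain ⟨r, hr, -⟩ := hconn.exists_path_of_dist x u
  have hex : ∃ j, r.getVert j ∈ p.support := ⟨r.length, by simp⟩
  set j := Nat.find hex
  have hj₀ : j ≠ 0 := fun h => hx (r.getVert_zero ▸ h ▸ Nat.find_spec hex)
  have hjr : j ≤ r.length := Nat.find_min' hex (by simp)
  have hy : r.getVert (j - 1) ∉ p.support := Nat.find_min hex (by omega)
  refine ⟨r.getVert (j - 1), r.getVert j, r.adj_getVert_pred (by omega) hjr,
    Nat.find_spec hex, hy, ?_⟩
  rcases (j - 1).eq_zero_or_pos with h | h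
  · rwa [h, r.getVert_zero]
  · exact hr.two_le_degree_getVert h (by omega)

lemma exists_adj_mem_support_of_notMem_support (hconn : G.Connected) (p : G.Walk u v)
    (hspine : ∀ y, 2 ≤ G.degree y → y ∈ p.support) (hx : x ∉ p.support) :
    ∃ y ∈ p.support, G.Adj x y := by
  obtain ⟨r, hr, -⟩ := hconn.exists_path_of_dist x u
  have hr₀ : 0 < r.length :=
    r.not_nil_iff_lt_length.mp (r.not_nil_of_ne fun h => hx (h ▸ p.start_mem_support))
  refine ⟨r.getVert 1, ?_, by simpa using r.adj_getVert_succ hr₀⟩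
  rcases (Nat.one_le_iff_ne_zero.mpr hr₀.ne').eq_or_lt with h | h
  · rw [r.getVert_of_length_le h.ge]
    exact p.start_mem_support
  · exact hspine _ (hr.two_le_degree_getVert one_pos h)

end Walk

variable (G) in
def HasThreeNonleafNeighbors (m : V) : Prop :=
  ∃ a b c, G.Adj m a ∧ G.Adj m b ∧ G.Adj m c ∧ a ≠ b ∧ a ≠ c ∧ b ≠ c ∧
    2 ≤ G.degree a ∧ 2 ≤ G.degree b ∧ 2 ≤ G.degree c

theorem IsTree.isCaterpillar [DecidableEq V] (hT : G.IsTree)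
    (h : ∀ m, ¬ G.HasThreeNonleafNeighbors m) : IsCaterpillar G := by
  refine ⟨hT, ?_⟩
  by_cases hN : ∃ x, 2 ≤ G.degree x
  swap
  · obtain ⟨u⟩ := hT.connected.nonempty
    exact ⟨u, u, .nil, .nil, fun x hx => (hN ⟨x, hx⟩).elim⟩
  obtain ⟨x₀, hx₀⟩ := hN
  -- the path between the two farthest apart non-leaves is the spine
  obtain ⟨⟨u, v⟩, huv, hmax⟩ :=
    (Finset.univ.filter fun q : V × V => 2 ≤ G.degree q.1 ∧ 2 ≤ G.degree q.2)
      |>.exists_max_image (fun q => G.dist q.1 q.2) ⟨(x₀, x₀), by simp [hx₀]⟩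
  simp only [Finset.mem_filter, Finset.mem_univ, true_and, and_imp, Prod.forall] at huv hmax
  obtain ⟨p, hp, -⟩ := hT.connected.exists_path_of_dist u v
  refine ⟨u, v, p, hp, fun x hx => by_contra fun hxp => ?_⟩
  obtain ⟨y, m, hym, hm, hy, hdy⟩ := p.exists_two_le_degree_adj_mem_support hT.connected hxp hx
  obtain ⟨i, rfl, hi⟩ := Walk.mem_support_iff_exists_getVert.mp hm
  rcases i.eq_zero_or_pos with rfl | hi₀
  · have := hT.isAcyclic.dist_lt_dist_of_adj_of_notMem_support hp (by simpa using hym) hy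
    have := hmax y v hdy huv.2
    omega
  rcases hi.eq_or_lt with rfl | hi
  · have := hT.isAcyclic.dist_lt_dist_of_adj_of_notMem_support hp.reverse
      (by simpa using hym) (by simpa using hy)
    have := hmax y u hdy huv.1
    have := G.dist_comm (u := u) (v := v)
    omega
  · have hnonleaf := hp.two_le_degree_getVert_of_two_le_degree huv.1 huv.2
    exact h _ ⟨p.getVert (i - 1), p.getVert (i + 1), y, (p.adj_getVert_pred hi₀ hi.le).symm,
      p.adj_getVert_succ hi, hym.symm, hp.getVert_pred_ne_getVert_succ hi₀ hi,
      fun he => hy (he ▸ p.getVert_mem_support _), fun he => hy (he ▸ p.getVert_mem_support _),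
      hnonleaf _, hnonleaf _, hdy⟩

end Degree

end SimpleGraph

open SimpleGraph

structure TwoLayerPlanarDrawing {V : Type*} (G : SimpleGraph V) where
  upper : Set V
  pos : V → ℕ
  injective : Injective pos
  adj_mem_iff : ∀ a b, G.Adj a b → (a ∈ upper ↔ b ∉ upper)
  not_cross : ∀ a b c d, G.Adj a b → G.Adj c d → a ∈ upper → c ∈ upper →
    s(a, b) ≠ s(c, d) →
    ¬ ((pos a < pos c ∧ pos d < pos b) ∨ (pos c < pos a ∧ pos b < pos d))

namespace TwoLayerPlanarDrawing

variable {V : Type*} {G : SimpleGraph V} {a b c d : V}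

lemma mem_upper_iff_of_adj_of_adj (D : TwoLayerPlanarDrawing G) (hab : G.Adj a b)
    (hbc : G.Adj b c) : a ∈ D.upper ↔ c ∈ D.upper := by
  rw [D.adj_mem_iff a b hab, D.adj_mem_iff c b hbc.symm]

lemma pos_le_pos_of_pos_lt (D : TwoLayerPlanarDrawing G) (hab : G.Adj a b) (hcd : G.Adj c d)
    (hac : a ∈ D.upper ↔ c ∈ D.upper) (h : D.pos a < D.pos c) : D.pos b ≤ D.pos d := by
  have hne : a ≠ c := by rintro rfl; exact h.false
  by_cases ha : a ∈ D.upper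
  · have hc := hac.mp ha
    have had : a ≠ d := by rintro rfl; exact (D.adj_mem_iff c a hcd).mp hc ha
    have := D.not_cross a b c d hab hcd ha hc (by simp [hne, had])
    omega
  · have hc : c ∉ D.upper := mt hac.mpr ha
    have hb : b ∈ D.upper := not_not.mp (mt (D.adj_mem_iff a b hab).mpr ha)
    have hd : d ∈ D.upper := not_not.mp (mt (D.adj_mem_iff c d hcd).mpr hc)
    have hbc : b ≠ c := by rintro rfl; exact hc hb
    have := D.not_cross b a d c hab.symm hcd.symm hb hd (by simp [hne, hbc])
    omega

lemma eq_of_adj_of_pos_lt_pos (D : TwoLayerPlanarDrawing G) {x y₁ y₂ z₁ z₂ : V}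
    (h₁ : G.Adj x y₁) (h₂ : G.Adj x y₂) (g₁ : G.Adj z₁ y₁) (g₂ : G.Adj z₂ y₂)
    (hz₁ : D.pos z₁ < D.pos x) (hz₂ : D.pos z₂ < D.pos x) : y₁ = y₂ :=
  D.injective <| le_antisymm
    (D.pos_le_pos_of_pos_lt g₁ h₂ (D.mem_upper_iff_of_adj_of_adj g₁ h₁.symm) hz₁)
    (D.pos_le_pos_of_pos_lt g₂ h₁ (D.mem_upper_iff_of_adj_of_adj g₂ h₂.symm) hz₂)

theorem isAcyclic (D : TwoLayerPlanarDrawing G) : G.IsAcyclic := by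
  classical
  intro w c hc
  obtain ⟨x, hx, hmax⟩ := c.support.toFinset.exists_max_image D.pos ⟨w, by simp⟩
  rw [List.mem_toFinset] at hx
  set c' := c.rotate x hx
  have hc' : c'.IsCycle := by simpa [c'] using hc
  have hlen := hc'.three_le_length
  have below : ∀ i, 0 < i → i < c'.length → D.pos (c'.getVert i) < D.pos x := by
    intro i hi₀ hi
    refine lt_of_le_of_ne (hmax _ ?_) fun h => ?_
    · exact List.mem_toFinset.mpr ((c.mem_support_rotate_iff x hx).mp (c'.getVert_mem_support i))
    · have := (hc'.getVert_endpoint_iff hi.le).mp (D.injective h)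
      omega
  exact hc'.snd_ne_penultimate <| D.eq_of_adj_of_pos_lt_pos (c'.adj_snd hc'.not_nil)
    (c'.adj_penultimate hc'.not_nil).symm (c'.adj_getVert_succ (i := 1) (by omega)).symm
    (c'.adj_getVert_pred (i := c'.length - 1) (by omega) (by omega))
    (below 2 (by omega) (by omega)) (below _ (by omega) (by omega))

theorem nonempty_of_blocks [Fintype V] (X : Set V)
    (hX : ∀ a b, G.Adj a b → (a ∈ X ↔ b ∉ X)) (β : V → ℕ) (σ : ℕ → V)
    (hstep : ∀ a b, G.Adj a b → β a ≤ β b + 1)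
    (hhub : ∀ a b, G.Adj a b → σ (β a) = a ∨ σ (β a) = b) :
    Nonempty (TwoLayerPlanarDrawing G) := by
  set e := Fintype.equivFin V
  set pos : V → ℕ := fun x => e x + β x * Fintype.card V
  have mono : ∀ {x y}, β x < β y → pos x < pos y := fun {x y} h =>
    calc pos x < Fintype.card V + β x * Fintype.card V := Nat.add_lt_add_right (e x).isLt _
      _ = (β x + 1) * Fintype.card V := by ring
      _ ≤ β y * Fintype.card V := Nat.mul_le_mul_right _ h
      _ ≤ pos y := Nat.le_add_left _ _
  have le_of_pos_lt : ∀ {x y}, pos x < pos y → β x ≤ β y :=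
    fun h => not_lt.mp fun h' => (mono h').asymm h
  refine ⟨⟨X, pos, fun x y hxy => e.injective (Fin.ext ?_), hX,
    fun a b c d hab hcd ha hc _ hcross => ?_⟩⟩
  · have := congrArg (· % Fintype.card V) hxy
    simp only [pos, Nat.add_mul_mod_self_right] at this
    rwa [Nat.mod_eq_of_lt (e x).isLt, Nat.mod_eq_of_lt (e y).isLt] at this
  have had : a ≠ d := by rintro rfl; exact (hX c a hcd).mp hc ha
  have hbc : b ≠ c := by rintro rfl; exact (hX a b hab).mp ha hc
  have hac : a ≠ c := by rintro rfl; omega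
  have hbd : b ≠ d := by rintro rfl; omega
  -- an edge meeting block `k` contains `σ k`, and the two edges are disjoint
  have hsep : β a ≠ β c ∧ β a ≠ β d ∧ β b ≠ β c ∧ β b ≠ β d := by
    have := hhub a b hab
    have := hhub b a hab.symm
    have := hhub c d hcd
    have := hhub d c hcd.symm
    refine ⟨?_, ?_, ?_, ?_⟩ <;> intro h <;> grind
  have := hstep a b hab
  have := hstep b a hab.symm
  have := hstep c d hcd
  have := hstep d c hcd.symm
  rcases hcross with ⟨h₁, h₂⟩ | ⟨h₁, h₂⟩
  · have := le_of_pos_lt h₁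
    have := le_of_pos_lt h₂
    omega
  · have := le_of_pos_lt h₁
    have := le_of_pos_lt h₂
    omega

variable [Fintype V] [DecidableRel G.Adj]

lemma degree_le_one_of_pos_lt_of_pos_lt (D : TwoLayerPlanarDrawing G) {m : V} (ha : G.Adj m a)
    (hb : G.Adj m b) (hc : G.Adj m c) (hab : D.pos a < D.pos b) (hbc : D.pos b < D.pos c) :
    G.degree b ≤ 1 := by
  by_contra! hdeg
  obtain ⟨m', hbm', hm'⟩ := exists_adj_ne_of_two_le_degree hdeg m
  have hside := D.mem_upper_iff_of_adj_of_adj hb hbm'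
  rcases (D.injective.ne hm').lt_or_gt with h | h
  · have := D.pos_le_pos_of_pos_lt hbm'.symm ha hside.symm h
    omega
  · have := D.pos_le_pos_of_pos_lt hc hbm'.symm hside h
    omega

lemma not_hasThreeNonleafNeighbors (D : TwoLayerPlanarDrawing G) (m : V) :
    ¬ G.HasThreeNonleafNeighbors m := by
  rintro ⟨a, b, c, ha, hb, hc, hab, hac, hbc, da, db, dc⟩
  wlog h : D.pos a < D.pos b generalizing a b
  · exact this b a hb ha hab.symm hbc hac db da
      (lt_of_le_of_ne (not_lt.mp h) (D.injective.ne hab.symm))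
  rcases (D.injective.ne hbc).lt_or_gt with h' | h'
  · have := D.degree_le_one_of_pos_lt_of_pos_lt ha hb hc h h'
    omega
  rcases (D.injective.ne hac).lt_or_gt with h'' | h''
  · have := D.degree_le_one_of_pos_lt_of_pos_lt ha hc hb h'' h'
    omega
  · have := D.degree_le_one_of_pos_lt_of_pos_lt hc ha hb h'' h
    omega

theorem isCaterpillar [DecidableEq V] (D : TwoLayerPlanarDrawing G) (hconn : G.Connected) :
    IsCaterpillar G :=
  IsTree.isCaterpillar ⟨hconn, D.isAcyclic⟩ D.not_hasThreeNonleafNeighbors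

end TwoLayerPlanarDrawing

theorem IsCaterpillar.nonempty_twoLayerPlanarDrawing {V : Type*} [Fintype V] [DecidableEq V]
    {G : SimpleGraph V} [DecidableRel G.Adj] (h : IsCaterpillar G) :
    Nonempty (TwoLayerPlanarDrawing G) := by
  obtain ⟨hT, u, v, p, hp, hspine⟩ := h
  obtain ⟨C⟩ := hT.colorable_two
  have hanchor : ∀ x, ∃ y ∈ p.support, ∀ z, G.Adj x z → y = x ∨ y = z := by
    intro x
    by_cases hx : x ∈ p.support
    · exact ⟨x, hx, fun _ _ => Or.inl rfl⟩
    obtain ⟨y, hy, hxy⟩ := p.exists_adj_mem_support_of_notMem_support hT.connected hspine hx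
    have hleaf : G.degree x ≤ 1 := not_lt.mp fun h => hx (hspine x h)
    exact ⟨y, hy, fun z hxz => Or.inr (eq_of_adj_of_adj_of_degree_le_one hleaf hxy hxz)⟩
  choose anchor hanchor_mem hanchor_eq using hanchor
  refine TwoLayerPlanarDrawing.nonempty_of_blocks {x | C x = 0} (fun a b hab => ?_)
    (fun x => G.dist u (anchor x)) p.getVert (fun a b hab => ?_) (fun a b hab => ?_)
  · have key : ∀ i j : Fin 2, i ≠ j → (i = 0 ↔ j ≠ 0) := by decide
    exact key _ _ (C.valid hab)
  · have : anchor a = anchor b ∨ G.Adj (anchor b) (anchor a) := by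
      rcases hanchor_eq a b hab with h₁ | h₁ <;>
        rcases hanchor_eq b a hab.symm with h₂ | h₂ <;> simp [h₁, h₂, hab, hab.symm]
    rcases this with h | h
    · simp [h]
    · rcases h.diff_dist_adj (u := u) with h | h | h <;> omega
  · obtain ⟨i, hi, hil⟩ := Walk.mem_support_iff_exists_getVert.mp (hanchor_mem a)
    rw [← hi, hT.isAcyclic.dist_getVert_of_isPath hp hil, hi]
    exact hanchor_eq a b hab

theorem stmt18_general {V : Type*} [Fintype V] [DecidableEq V]
    (G : SimpleGraph V) [DecidableRel G.Adj]
    (hconn : G.Connected) :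
    (∃ (X : Set V) (π : V → ℕ), Injective π ∧
      (∀ a b : V, G.Adj a b → (a ∈ X ↔ b ∉ X)) ∧
      ∀ a b c d : V, G.Adj a b → G.Adj c d → a ∈ X → c ∈ X →
        s(a, b) ≠ s(c, d) →
        ¬ ((π a < π c ∧ π d < π b) ∨ (π c < π a ∧ π b < π d))) ↔
    IsCaterpillar G := by
  constructor
  · rintro ⟨X, π, hπ, hX, hcross⟩
    exact TwoLayerPlanarDrawing.isCaterpillar ⟨X, π, hπ, hX, hcross⟩ hconn
  · intro h
    obtain ⟨D⟩ := h.nonempty_twoLayerPlanarDrawing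
    exact ⟨D.upper, D.pos, D.injective, D.adj_mem_iff, D.not_cross⟩

/-- A connected bipartite graph admits a 2-layer 0-planar drawing (a 2-layer
drawing with no crossings, for some bipartition `X` and orders on the two
layers) iff it is a caterpillar. -/
theorem stmt18 {V : Type*} [Fintype V] [DecidableEq V]
    (G : SimpleGraph V) [DecidableRel G.Adj]
    (hconn : G.Connected) (hbip : G.Colorable 2) :
    (∃ (X : Set V) (π : V → ℕ), Injective π ∧
      (∀ a b : V, G.Adj a b → (a ∈ X ↔ b ∉ X)) ∧
      ∀ a b c d : V, G.Adj a b → G.Adj c d → a ∈ X → c ∈ X →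
        s(a, b) ≠ s(c, d) →
        ¬ ((π a < π c ∧ π d < π b) ∨ (π c < π a ∧ π b < π d))) ↔
    IsCaterpillar G :=
  stmt18_general G hconn
end
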